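/- arXiv:2209.11026 — 6 statements merged into one kernel-verified Lean document; each statement's English description precedes it below -/
import Mathlib

section
/- Let G : ℝ → ℝ be locally Lipschitz and suppose there exists R > 0 such that the improper integral ∫_R^∞ 1/G(u) du converges to a finite negative value (in particular G(u) < 0 for u ≥ R). For x ∈ ℝ let ψ_t(x) denote the unique solution of the ODE dψ/dt = G(ψ) with ψ_0 = x. Then for every t > 0 the limit ψ_t(∞) := lim_{x → ∞} ψ_t(x) exists and is finite. -/
/-!
Along a trajectory above `R`, `d/ds ∫^{ψ_s} 1 / G = 1`, so `∫ 1 / G` measures elapsed time. Choose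
`M ≥ R` with `∫_M^∞ 1 / G > -t`: a trajectory starting above `M` then reaches `M` before time `t`,
and since `G < 0` at `M` it cannot climb back. Hence `ψ_t ≤ M` everywhere, and `x ↦ ψ_t x` is
monotone by comparison, so it converges as `x → ∞`.
-/

open MeasureTheory Filter Set Topology

theorem tendsto_setIntegral_Ici_atTop_zero {E : Type*} [NormedAddCommGroup E] [NormedSpace ℝ E]
    {f : ℝ → E} {R : ℝ} (hf : IntegrableOn f (Ici R)) :
    Tendsto (fun M => ∫ u in Ici M, f u) atTop (𝓝 0) := by
  have hempty : (⋂ M : ℝ, Ici M) = ∅ :=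
    eq_empty_of_forall_notMem fun u hu => by linarith [mem_Ici.mp (mem_iInter.mp hu (u + 1))]
  simpa [hempty] using tendsto_setIntegral_of_antitone (μ := volume)
    (fun _ => measurableSet_Ici) (fun _ _ hab => Ici_subset_Ici.mpr hab) ⟨R, hf⟩

theorem le_of_hasDerivAt_comp_of_neg {G f : ℝ → ℝ} {M a b : ℝ} (hab : a ≤ b) (hGM : G M < 0)
    (hf : ∀ s ∈ Icc a b, HasDerivAt f (G (f s)) s) (ha : f a ≤ M) : f b ≤ M :=
  image_le_of_deriv_right_lt_deriv_boundary (B := fun _ => M) (B' := fun _ => 0)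
    (fun s hs => (hf s hs).continuousAt.continuousWithinAt)
    (fun s hs => (hf s (Ico_subset_Icc_self hs)).hasDerivWithinAt) ha
    (fun _ => hasDerivAt_const _ _) (fun _ _ hfs => hfs ▸ hGM) ⟨hab, le_rfl⟩

theorem exists_le_of_hasDerivAt_comp_of_tail {G f : ℝ → ℝ} {M t : ℝ} (hG : Continuous G)
    (ht : 0 ≤ t) (hneg : ∀ u, M ≤ u → G u < 0) (hint : IntegrableOn (fun u => 1 / G u) (Ici M))
    (htail : -t < ∫ u in Ici M, 1 / G u) (hf : ∀ s ∈ Icc 0 t, HasDerivAt f (G (f s)) s) :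
    ∃ s ∈ Icc 0 t, f s ≤ M := by
  by_contra! habove
  have hinv_nonpos : ∀ u ∈ Ici M, 1 / G u ≤ 0 := fun u hu => (one_div_neg.mpr (hneg u hu)).le
  set F : ℝ → ℝ := fun y => ∫ u in M..y, 1 / G u
  have hF_eq : ∀ y, M ≤ y → F y = ∫ u in Ioc M y, 1 / G u :=
    fun y hy => intervalIntegral.integral_of_le hy
  have hF_deriv : ∀ s ∈ Icc 0 t, HasDerivAt (fun s => F (f s) - s) 0 s := by
    intro s hs
    have hGs : G (f s) ≠ 0 := (hneg _ (habove s hs).le).ne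
    have hFd : HasDerivAt F (1 / G (f s)) (f s) :=
      intervalIntegral.integral_hasDerivAt_right
        ((intervalIntegrable_iff_integrableOn_Ioc_of_le (habove s hs).le).mpr
          (hint.mono_set (Ioc_subset_Ioi_self.trans Ioi_subset_Ici_self)))
        (hG.measurable.const_div 1).aestronglyMeasurable.stronglyMeasurableAtFilter
        (continuousAt_const.div hG.continuousAt hGs)
    have h := (hFd.comp s (hf s hs)).sub (hasDerivAt_id s)
    rwa [one_div_mul_cancel hGs, sub_self] at h
  have hconst : F (f t) - t = F (f 0) - 0 :=
    constant_of_has_deriv_right_zero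
      (fun s hs => (hF_deriv s hs).continuousAt.continuousWithinAt)
      (fun s hs => (hF_deriv s (Ico_subset_Icc_self hs)).hasDerivWithinAt) t ⟨ht, le_rfl⟩
  have hFt : F (f t) ≤ 0 := by
    rw [hF_eq _ (habove t ⟨ht, le_rfl⟩).le]
    exact setIntegral_nonpos measurableSet_Ioc fun u hu => hinv_nonpos u hu.1.le
  have hF0 : ∫ u in Ici M, 1 / G u ≤ F (f 0) := by
    rw [hF_eq _ (habove 0 ⟨le_rfl, ht⟩).le, ← neg_le_neg_iff, ← integral_neg, ← integral_neg]
    exact setIntegral_mono_set hint.neg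
      ((ae_restrict_iff' measurableSet_Ici).mpr (ae_of_all _ fun u hu =>
        neg_nonneg.mpr (hinv_nonpos u hu)))
      (Ioc_subset_Ioi_self.trans Ioi_subset_Ici_self).eventuallyLE
  linarith

theorem le_of_hasDerivAt_comp_of_tail {G f : ℝ → ℝ} {M t : ℝ} (hG : Continuous G)
    (ht : 0 ≤ t) (hneg : ∀ u, M ≤ u → G u < 0) (hint : IntegrableOn (fun u => 1 / G u) (Ici M))
    (htail : -t < ∫ u in Ici M, 1 / G u) (hf : ∀ s ∈ Icc 0 t, HasDerivAt f (G (f s)) s) :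
    f t ≤ M := by
  obtain ⟨s, hs, hfs⟩ := exists_le_of_hasDerivAt_comp_of_tail hG ht hneg hint htail hf
  exact le_of_hasDerivAt_comp_of_neg hs.2 (hneg M le_rfl)
    (fun r hr => hf r ⟨hs.1.trans hr.1, hr.2⟩) hfs

theorem stmt_0_general
    (G : ℝ → ℝ) (hG : LocallyLipschitz G)
    (R : ℝ)
    (hGneg : ∀ u, R ≤ u → G u < 0)
    (hInt : IntegrableOn (fun u => 1 / G u) (Set.Ici R))
    (ψ : ℝ → ℝ → ℝ)
    (hψ : ∀ x : ℝ, ∀ t ≥ (0:ℝ), HasDerivAt (fun s => ψ s x) (G (ψ t x)) t)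
    (hmono : ∀ x₁ x₂ : ℝ, x₁ ≤ x₂ → ∀ t ≥ (0:ℝ), ψ t x₁ ≤ ψ t x₂) :
    ∀ t > (0:ℝ), ∃ L : ℝ, Tendsto (fun x => ψ t x) atTop (nhds L) := by
  intro t ht
  obtain ⟨M, hRM, hM⟩ : ∃ M, R ≤ M ∧ -t < ∫ u in Ici M, 1 / G u :=
    ((eventually_ge_atTop R).and ((tendsto_setIntegral_Ici_atTop_zero hInt).eventually
      (eventually_gt_nhds (neg_neg_of_pos ht)))).exists
  have hbound : ∀ x, ψ t x ≤ M := fun x =>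
    le_of_hasDerivAt_comp_of_tail (f := fun s => ψ s x) hG.continuous ht.le
      (fun u hu => hGneg u (hRM.trans hu)) (hInt.mono_set (Ici_subset_Ici.mpr hRM)) hM
      (fun s hs => hψ x s hs.1)
  exact ⟨_, tendsto_atTop_ciSup (fun a b hab => hmono a b hab t ht.le)
    ⟨M, forall_mem_range.mpr hbound⟩⟩

/-- descent from infinity for the ODE dψ/dt = G(ψ). -/
theorem stmt_0
    (G : ℝ → ℝ) (hG : LocallyLipschitz G)
    (R : ℝ) (hR : 0 < R)
    (hGneg : ∀ u, R ≤ u → G u < 0)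
    (hInt : IntegrableOn (fun u => 1 / G u) (Set.Ici R))
    (hIntNeg : (∫ u in Set.Ici R, 1 / G u) < 0)
    (ψ : ℝ → ℝ → ℝ)
    (hψ0 : ∀ x, ψ 0 x = x)
    (hψ : ∀ x : ℝ, ∀ t ≥ (0:ℝ), HasDerivAt (fun s => ψ s x) (G (ψ t x)) t)
    (hmono : ∀ x₁ x₂ : ℝ, x₁ ≤ x₂ → ∀ t ≥ (0:ℝ), ψ t x₁ ≤ ψ t x₂) :
    ∀ t > (0:ℝ), ∃ L : ℝ, Tendsto (fun x => ψ t x) atTop (nhds L) :=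
  stmt_0_general G hG R hGneg hInt ψ hψ hmono
end

section
/- Let G : ℝ → ℝ be locally Lipschitz with G(u) < 0 for u ≥ R for some R > 0, and assume ∫_R^∞ du/G(u) is finite. With L := ψ_T(R) and F_L(x) := ∫_L^x du/G(u) for x ∈ [L,∞], extended by F_L(∞) := lim_{x→∞} F_L(x) ∈ (−∞, 0), the extended solution ψ_t(∞) satisfies the implicit equation F_L(ψ_t(∞)) = t + F_L(∞) for all t ∈ (0, T], and consequently for any 0 < t₀ ≤ t ≤ T one has ψ_t(∞) = ψ_{t₀}(∞) + ∫_{t₀}^t G(ψ_s(∞)) ds. -/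
/-!
Above `L`, `G` does not vanish, so along any solution `x` staying above `L` the chain rule
gives `(F_L ∘ x)' = x' / G(x) = 1`. The solution from infinity is such a solution on `(0, T]`:
the flow is monotone and continuous in the initial datum (Grönwall), so by the semigroup law
`ψ_t(∞) = ψ_{t - t₀}(ψ_{t₀}(∞))`, and it dominates `ψ_t(R) ≥ ψ_T(R) = L`. Hence
`F_L(ψ_t(∞)) - t` is constant on `(0, T]`, and since `ψ_t(∞) → ∞` as `t → 0⁺` the constant is
`F_L(∞)`. The integral form is the fundamental theorem of calculus for `t ↦ ψ_t(∞)`.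
-/

open MeasureTheory Filter intervalIntegral Set Topology

theorem LocallyLipschitz.eqOn_Icc_of_hasDerivAt {E : Type*} [NormedAddCommGroup E]
    [NormedSpace ℝ E] {G : E → E} (hG : LocallyLipschitz G) {f g : ℝ → E} {a b t₀ : ℝ}
    (hf : ∀ s ∈ Icc a b, HasDerivAt f (G (f s)) s)
    (hg : ∀ s ∈ Icc a b, HasDerivAt g (G (g s)) s)
    (ht₀ : t₀ ∈ Icc a b) (heq : f t₀ = g t₀) : EqOn f g (Icc a b) := by
  have hfc : ContinuousOn f (Icc a b) := HasDerivAt.continuousOn hf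
  have hgc : ContinuousOn g (Icc a b) := HasDerivAt.continuousOn hg
  obtain ⟨K, hK⟩ := hG.locallyLipschitzOn.exists_lipschitzOnWith_of_compact
    ((isCompact_Icc.image_of_continuousOn hfc).union (isCompact_Icc.image_of_continuousOn hgc))
  have hfK (s) (hs : s ∈ Icc a b) : f s ∈ f '' Icc a b ∪ g '' Icc a b := .inl ⟨s, hs, rfl⟩
  have hgK (s) (hs : s ∈ Icc a b) : g s ∈ f '' Icc a b ∪ g '' Icc a b := .inr ⟨s, hs, rfl⟩
  have hleft : Icc a t₀ ⊆ Icc a b := Icc_subset_Icc_right ht₀.2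
  have hright : Icc t₀ b ⊆ Icc a b := Icc_subset_Icc_left ht₀.1
  rw [← Icc_union_Icc_eq_Icc ht₀.1 ht₀.2]
  refine EqOn.union ?_ ?_
  · have hmem (s) (hs : s ∈ Ioc a t₀) : s ∈ Icc a b := hleft (Ioc_subset_Icc_self hs)
    exact ODE_solution_unique_of_mem_Icc_left (v := fun _ => G) (fun _ _ => hK)
      (hfc.mono hleft) (fun s hs => (hf s (hmem s hs)).hasDerivWithinAt)
      (fun s hs => hfK s (hmem s hs))
      (hgc.mono hleft) (fun s hs => (hg s (hmem s hs)).hasDerivWithinAt)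
      (fun s hs => hgK s (hmem s hs)) heq
  · have hmem (s) (hs : s ∈ Ico t₀ b) : s ∈ Icc a b := hright (Ico_subset_Icc_self hs)
    exact ODE_solution_unique_of_mem_Icc_right (v := fun _ => G) (fun _ _ => hK)
      (hfc.mono hright) (fun s hs => (hf s (hmem s hs)).hasDerivWithinAt)
      (fun s hs => hfK s (hmem s hs))
      (hgc.mono hright) (fun s hs => (hg s (hmem s hs)).hasDerivWithinAt)
      (fun s hs => hgK s (hmem s hs)) heq

theorem eq_add_of_hasDerivAt_one_of_tendsto {h : ℝ → ℝ} {T c : ℝ}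
    (hderiv : ∀ s ∈ Ioc 0 T, HasDerivAt h 1 s) (hlim : Tendsto h (𝓝[>] 0) (𝓝 c))
    {t : ℝ} (ht : t ∈ Ioc 0 T) : h t = t + c := by
  have hconst : ∀ t₀ ∈ Ioo 0 t, h t₀ - t₀ = h t - t := by
    intro t₀ ht₀
    have hsub : uIcc t₀ t ⊆ Ioc 0 T := by
      rw [uIcc_of_le ht₀.2.le]
      exact fun s hs => ⟨ht₀.1.trans_le hs.1, hs.2.trans ht.2⟩
    have := integral_eq_sub_of_hasDerivAt (fun s hs => hderiv s (hsub hs))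
      (intervalIntegrable_const (a := t₀) (b := t) (c := (1:ℝ)))
    rw [intervalIntegral.integral_const, smul_eq_mul, mul_one] at this
    linarith
  have hlim' : Tendsto (fun t₀ => h t₀ - t₀) (𝓝[>] 0) (𝓝 (c - 0)) :=
    hlim.sub (tendsto_id.mono_right nhdsWithin_le_nhds)
  have := tendsto_nhds_unique (tendsto_const_nhds.congr'
    (eventually_of_mem (Ioo_mem_nhdsGT ht.1) fun t₀ ht₀ => (hconst t₀ ht₀).symm)) hlim'
  linarith

theorem hasDerivAt_integral_one_div_comp {G f : ℝ → ℝ} (hGc : Continuous G) {L s : ℝ}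
    (hf : HasDerivAt f (G (f s)) s) (hL : L ≤ f s) (hne : ∀ u ∈ Icc L (f s), G u ≠ 0) :
    HasDerivAt (fun r => ∫ u in L..f r, 1 / G u) 1 s := by
  have hGs : G (f s) ≠ 0 := hne _ ⟨hL, le_rfl⟩
  have hF : HasDerivAt (fun x => ∫ u in L..x, 1 / G u) (1 / G (f s)) (f s) :=
    integral_hasDerivAt_right
      ((continuousOn_const.div hGc.continuousOn hne).intervalIntegrable_of_Icc hL)
      (measurable_const.div hGc.measurable).stronglyMeasurable.stronglyMeasurableAtFilter
      (continuousAt_const.div hGc.continuousAt hGs)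
  simpa [Function.comp_def, one_div, inv_mul_cancel₀ hGs] using hF.comp s hf

section Flow

variable {G : ℝ → ℝ} {ψ : ℝ → ℝ → ℝ}
  (hψ : ∀ x : ℝ, ∀ t ≥ (0:ℝ), HasDerivAt (fun s => ψ s x) (G (ψ t x)) t)
include hψ

theorem flow_continuousOn (x : ℝ) : ContinuousOn (fun s => ψ s x) (Ici 0) :=
  HasDerivAt.continuousOn fun s hs => hψ x s hs

variable (hG : LocallyLipschitz G)
include hG

theorem flow_eq_of_eq {x y s t : ℝ} (hs : s ∈ Icc 0 t) (h : ψ s x = ψ s y) :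
    ψ t x = ψ t y :=
  hG.eqOn_Icc_of_hasDerivAt (fun r hr => hψ x r hr.1) (fun r hr => hψ y r hr.1) hs h
    ⟨hs.1.trans hs.2, le_rfl⟩

variable (hψ0 : ∀ x, ψ 0 x = x)
include hψ0

theorem flow_monotone {t : ℝ} (ht : 0 ≤ t) : Monotone (ψ t) := by
  intro x y hxy
  by_contra! hlt
  have hcont : ContinuousOn (fun s => ψ s x - ψ s y) (Icc 0 t) :=
    ((flow_continuousOn hψ x).sub (flow_continuousOn hψ y)).mono Icc_subset_Ici_self
  obtain ⟨s, hs, hcross⟩ := intermediate_value_Icc ht hcont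
    (show (0:ℝ) ∈ Icc (ψ 0 x - ψ 0 y) (ψ t x - ψ t y) by
      rw [hψ0, hψ0]; constructor <;> linarith)
  have := flow_eq_of_eq hψ hG hs (sub_eq_zero.1 hcross)
  linarith

theorem flow_add (x : ℝ) {t₀ u : ℝ} (ht₀ : 0 ≤ t₀) (hu : 0 ≤ u) :
    ψ (t₀ + u) x = ψ u (ψ t₀ x) := by
  have hshift :
      ∀ s ∈ Icc (0:ℝ) u, HasDerivAt (fun r => ψ (t₀ + r) x) (G (ψ (t₀ + s) x)) s :=
    fun s hs => (hψ x (t₀ + s) (by linarith [hs.1])).comp_const_add t₀ s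
  exact hG.eqOn_Icc_of_hasDerivAt hshift (fun s hs => hψ (ψ t₀ x) s hs.1)
    (left_mem_Icc.2 hu) (by rw [add_zero, hψ0]) (right_mem_Icc.2 hu)

theorem flow_neg_of_neg {x : ℝ} (hx : G x < 0) {t : ℝ} (ht : 0 ≤ t) : G (ψ t x) < 0 := by
  -- a zero of `G` on the trajectory would be a stationary point that the trajectory reaches
  have hne : ∀ s ∈ Icc (0:ℝ) t, G (ψ s x) ≠ 0 := by
    intro s hs hzero
    have hstat : ∀ r ∈ Icc (0:ℝ) t, HasDerivAt (fun _ => ψ s x) (G (ψ s x)) r :=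
      fun r _ => by
        rw [hzero]; exact hasDerivAt_const r _
    have := hG.eqOn_Icc_of_hasDerivAt (fun r hr => hψ x r hr.1) hstat hs rfl (left_mem_Icc.2 ht)
    simp only [hψ0] at this
    exact hx.ne (this ▸ hzero)
  by_contra! hnonneg
  have hcont : ContinuousOn (fun s => G (ψ s x)) (Icc 0 t) :=
    hG.continuous.comp_continuousOn ((flow_continuousOn hψ x).mono Icc_subset_Ici_self)
  obtain ⟨s, hs, hzero⟩ := intermediate_value_Icc ht hcont
    (show (0:ℝ) ∈ Icc (G (ψ 0 x)) (G (ψ t x)) by rw [hψ0]; exact ⟨hx.le, hnonneg⟩)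
  exact hne s hs hzero

theorem flow_antitoneOn_of_neg {x : ℝ} (hx : G x < 0) : AntitoneOn (fun s => ψ s x) (Ici 0) := by
  refine antitoneOn_of_deriv_nonpos (convex_Ici 0) (flow_continuousOn hψ x) ?_ ?_ <;>
    rw [interior_Ici]
  · exact fun s hs => (hψ x s (le_of_lt hs)).differentiableAt.differentiableWithinAt
  · intro s hs
    rw [(hψ x s (le_of_lt hs)).deriv]
    exact (flow_neg_of_neg hψ hG hψ0 hx (le_of_lt hs)).le

theorem neg_of_flow_le {R T : ℝ} (hGneg : ∀ u, R ≤ u → G u < 0) (hT : 0 ≤ T) {y : ℝ}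
    (hy : ψ T R ≤ y) : G y < 0 := by
  rcases le_or_gt R y with hRy | hyR
  · exact hGneg y hRy
  · obtain ⟨s, hs, rfl⟩ := intermediate_value_Icc' hT
      ((flow_continuousOn hψ R).mono Icc_subset_Ici_self)
      (show y ∈ Icc (ψ T R) (ψ 0 R) by rw [hψ0]; exact ⟨hy, hyR.le⟩)
    exact flow_neg_of_neg hψ hG hψ0 (hGneg R le_rfl) hs.1

theorem continuous_flow {u : ℝ} (hu : 0 ≤ u) : Continuous (ψ u) := by
  refine continuous_iff_continuousAt.2 fun x₀ => ?_
  -- by monotonicity, trajectories from `[x₀ - 1, x₀ + 1]` stay between two compact arcs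
  obtain ⟨m, hm⟩ := (isCompact_Icc.image_of_continuousOn
    ((flow_continuousOn hψ (x₀ - 1)).mono Icc_subset_Ici_self) : IsCompact
      ((fun s => ψ s (x₀ - 1)) '' Icc 0 u)).bddBelow
  obtain ⟨M, hM⟩ := (isCompact_Icc.image_of_continuousOn
    ((flow_continuousOn hψ (x₀ + 1)).mono Icc_subset_Ici_self) : IsCompact
      ((fun s => ψ s (x₀ + 1)) '' Icc 0 u)).bddAbove
  have hmem : ∀ z ∈ Icc (x₀ - 1) (x₀ + 1), ∀ s ∈ Icc 0 u, ψ s z ∈ Icc m M :=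
    fun z hz s hs =>
      ⟨(hm ⟨s, hs, rfl⟩).trans (flow_monotone hψ hG hψ0 hs.1 hz.1),
        (flow_monotone hψ hG hψ0 hs.1 hz.2).trans (hM ⟨s, hs, rfl⟩)⟩
  obtain ⟨C, hC⟩ := hG.locallyLipschitzOn.exists_lipschitzOnWith_of_compact
    (isCompact_Icc : IsCompact (Icc m M))
  have hx₀ : x₀ ∈ Icc (x₀ - 1) (x₀ + 1) := ⟨by linarith, by linarith⟩
  refine continuousAt_of_locally_lipschitz one_pos (Real.exp (C * u)) fun z hz => ?_
  have hz' : z ∈ Icc (x₀ - 1) (x₀ + 1) := by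
    rw [Real.dist_eq, abs_lt] at hz; constructor <;> linarith
  have := dist_le_of_trajectories_ODE_of_mem (v := fun _ => G) (s := fun _ => Icc m M)
    (fun _ _ => hC) ((flow_continuousOn hψ z).mono Icc_subset_Ici_self)
    (fun s hs => (hψ z s hs.1).hasDerivWithinAt)
    (fun s hs => hmem z hz' s (Ico_subset_Icc_self hs))
    ((flow_continuousOn hψ x₀).mono Icc_subset_Ici_self)
    (fun s hs => (hψ x₀ s hs.1).hasDerivWithinAt)
    (fun s hs => hmem x₀ hx₀ s (Ico_subset_Icc_self hs))
    (show dist (ψ 0 z) (ψ 0 x₀) ≤ dist z x₀ by rw [hψ0, hψ0]) u (right_mem_Icc.2 hu)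
  simpa [sub_zero, mul_comm] using this

variable {ψinf : ℝ → ℝ}
  (hψinf : ∀ t > (0:ℝ), Tendsto (fun x => ψ t x) atTop (𝓝 (ψinf t)))
include hψinf

theorem flow_le_limit {t : ℝ} (ht : 0 < t) (x : ℝ) : ψ t x ≤ ψinf t :=
  (flow_monotone hψ hG hψ0 ht.le).ge_of_tendsto (hψinf t ht) x

theorem limit_flow_add {t₀ u : ℝ} (ht₀ : 0 < t₀) (hu : 0 ≤ u) :
    ψinf (t₀ + u) = ψ u (ψinf t₀) := by
  refine tendsto_nhds_unique (hψinf (t₀ + u) (by linarith)) ?_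
  simp_rw [flow_add hψ hG hψ0 _ ht₀.le hu]
  exact ((continuous_flow hψ hG hψ0 hu).tendsto _).comp (hψinf t₀ ht₀)

theorem hasDerivAt_limit_flow {t : ℝ} (ht : 0 < t) : HasDerivAt ψinf (G (ψinf t)) t := by
  -- near `t`, the limit solution is the trajectory issued from `ψinf (t / 2)` at time `t / 2`
  have hloc : ∀ s ≥ t / 2, ψinf s = ψ (s - t / 2) (ψinf (t / 2)) := fun s hs => by
    rw [← limit_flow_add hψ hG hψ0 hψinf (half_pos ht) (sub_nonneg.2 hs), add_sub_cancel]
  have hderiv : HasDerivAt (fun s => ψ (s - t / 2) (ψinf (t / 2))) (G (ψinf t)) t := by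
    rw [hloc t (half_le_self ht.le)]
    exact (hψ _ (t - t / 2) (by linarith)).comp_sub_const t (t / 2)
  exact hderiv.congr_of_eventuallyEq
    (eventually_ge_nhds (half_lt_self ht) |>.mono fun s hs => hloc s hs)

theorem tendsto_limit_flow_nhdsGT_zero : Tendsto ψinf (𝓝[>] 0) atTop := by
  refine tendsto_atTop.2 fun b => ?_
  have hstart : Tendsto (fun s => ψ s (b + 1)) (𝓝 0) (𝓝 (b + 1)) := by
    simpa [ContinuousAt, hψ0] using (hψ (b + 1) 0 le_rfl).continuousAt
  filter_upwards [nhdsWithin_le_nhds (hstart.eventually (eventually_gt_nhds (lt_add_one b))),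
    self_mem_nhdsWithin] with s hs hpos
  exact hs.le.trans (flow_le_limit hψ hG hψ0 hψinf hpos _)

theorem limit_flow_eq_add_integral {t₀ t : ℝ} (ht₀ : 0 < t₀) (ht : t₀ ≤ t) :
    ψinf t = ψinf t₀ + ∫ s in t₀..t, G (ψinf s) := by
  have hderiv : ∀ s ∈ uIcc t₀ t, HasDerivAt ψinf (G (ψinf s)) s := fun s hs => by
    rw [uIcc_of_le ht] at hs
    exact hasDerivAt_limit_flow hψ hG hψ0 hψinf (ht₀.trans_le hs.1)
  rw [integral_eq_sub_of_hasDerivAt hderiv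
    (hG.continuous.comp_continuousOn (HasDerivAt.continuousOn hderiv)).intervalIntegrable]
  ring

end Flow

theorem stmt_1_general
    (G : ℝ → ℝ) (hG : LocallyLipschitz G)
    (R T : ℝ)
    (hGneg : ∀ u, R ≤ u → G u < 0)
    (ψ : ℝ → ℝ → ℝ)
    (hψ0 : ∀ x, ψ 0 x = x)
    (hψ : ∀ x : ℝ, ∀ t ≥ (0:ℝ), HasDerivAt (fun s => ψ s x) (G (ψ t x)) t)
    (ψinf : ℝ → ℝ)
    (hψinf : ∀ t > (0:ℝ), Tendsto (fun x => ψ t x) atTop (nhds (ψinf t)))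
    (L : ℝ) (hL : L = ψ T R)
    (FL : ℝ → ℝ) (hFL : ∀ x : ℝ, FL x = ∫ u in L..x, 1 / G u)
    (FLinf : ℝ) (hFLlim : Tendsto FL atTop (nhds FLinf)) :
    (∀ t ∈ Set.Ioc (0:ℝ) T, FL (ψinf t) = t + FLinf) ∧
    (∀ t₀ t : ℝ, 0 < t₀ → t₀ ≤ t → t ≤ T →
      ψinf t = ψinf t₀ + ∫ s in t₀..t, G (ψinf s)) := by
  have hLle : ∀ s ∈ Ioc 0 T, L ≤ ψinf s := fun s hs => hL ▸
    (flow_antitoneOn_of_neg hψ hG hψ0 (hGneg R le_rfl) hs.1.le (hs.1.le.trans hs.2) hs.2).trans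
      (flow_le_limit hψ hG hψ0 hψinf hs.1 R)
  have hFLderiv : ∀ s ∈ Ioc 0 T, HasDerivAt (FL ∘ ψinf) 1 s := fun s hs => by
    rw [show FL ∘ ψinf = fun r => ∫ u in L..ψinf r, 1 / G u from funext fun r => hFL _]
    exact hasDerivAt_integral_one_div_comp hG.continuous
      (hasDerivAt_limit_flow hψ hG hψ0 hψinf hs.1) (hLle s hs)
      fun u hu => (neg_of_flow_le hψ hG hψ0 hGneg (hs.1.le.trans hs.2) (hL ▸ hu.1)).ne
  exact ⟨fun t ht => eq_add_of_hasDerivAt_one_of_tendsto hFLderiv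
      (hFLlim.comp (tendsto_limit_flow_nhdsGT_zero hψ hG hψ0 hψinf)) ht,
    fun t₀ t h0 h1 _ => limit_flow_eq_add_integral hψ hG hψ0 hψinf h0 h1⟩

/-- implicit equation and integral form for the solution started from +∞. -/
theorem stmt_1
    (G : ℝ → ℝ) (hG : LocallyLipschitz G)
    (R T : ℝ) (hR : 0 < R) (hT : 0 < T)
    (hGneg : ∀ u, R ≤ u → G u < 0)
    (hInt : IntegrableOn (fun u => 1 / G u) (Set.Ici R))
    (ψ : ℝ → ℝ → ℝ)
    (hψ0 : ∀ x, ψ 0 x = x)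
    (hψ : ∀ x : ℝ, ∀ t ≥ (0:ℝ), HasDerivAt (fun s => ψ s x) (G (ψ t x)) t)
    (ψinf : ℝ → ℝ)
    (hψinf : ∀ t > (0:ℝ), Tendsto (fun x => ψ t x) atTop (nhds (ψinf t)))
    (L : ℝ) (hL : L = ψ T R)
    (FL : ℝ → ℝ) (hFL : ∀ x : ℝ, FL x = ∫ u in L..x, 1 / G u)
    (FLinf : ℝ) (hFLlim : Tendsto FL atTop (nhds FLinf))
    (hFLneg : FLinf < 0) :
    (∀ t ∈ Set.Ioc (0:ℝ) T, FL (ψinf t) = t + FLinf) ∧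
    (∀ t₀ t : ℝ, 0 < t₀ → t₀ ≤ t → t ≤ T →
      ψinf t = ψinf t₀ + ∫ s in t₀..t, G (ψinf s)) :=
  stmt_1_general G hG R T hGneg ψ hψ0 hψ ψinf hψinf L hL FL hFL FLinf hFLlim
end

section
/- Let V : ℝ → [0,∞) be C², convex, even with V(0)=0, satisfying the local behavior hypothesis with constants C₀, α > 0, and the growth hypothesis: there are c₀, R₀ > 0 and β > −1 with V'(z) ≥ c₀ z^{1+β} for z ≥ R₀. Set b_ε := ε^{1/(2+α)}, C_ε := ∫_ℝ exp(−2V(y)/ε) dy and C := ∫_ℝ exp(−2C₀|z|^{2+α}/(2+α)) dz. Then lim_{ε→0} C_ε / b_ε = C. -/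
/-!
Substituting `y = b z` with `b ^ (2 + α) = ε` turns `C_ε / b_ε` into
`∫ exp (-2 V (b z) / b ^ (2 + α)) dz`. Integrating the local behaviour of `V'` from `0` to `z`
gives `V (b z) / b ^ (2 + α) → C₀ |z| ^ (2 + α) / (2 + α)` pointwise as `b → 0⁺`. Convexity and
`V 0 = 0` give `V (t x) ≥ t V x` for `t ≥ 1`; applied at `x = b` this bounds the rescaled
potentials below by `κ (|z| - 1)` for all small `b`, and dominated convergence with the
majorant `exp (-2 κ (|z| - 1))` concludes.
-/

open MeasureTheory Filter Set Topology

theorem integrable_exp_neg_mul_abs {c : ℝ} (hc : 0 < c) :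
    Integrable fun x : ℝ => Real.exp (-(c * |x|)) := by
  rw [← integrableOn_univ, ← Iic_union_Ioi (a := 0)]
  refine IntegrableOn.union ?_ ?_
  · refine (integrableOn_exp_mul_Iic hc 0).congr_fun (fun x hx => ?_) measurableSet_Iic
    simp [abs_of_nonpos (show x ≤ 0 from hx)]
  · refine (integrableOn_exp_mul_Ioi (neg_neg_of_pos hc) 0).congr_fun (fun x hx => ?_)
      measurableSet_Ioi
    simp [abs_of_pos (show 0 < x from hx)]

theorem tendsto_integral_exp_neg_of_forall_mul_abs_sub_one_le {ι : Type*} {L : Filter ι}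
    [L.IsCountablyGenerated] {F : ι → ℝ → ℝ} {f : ℝ → ℝ} {κ : ℝ} (hκ : 0 < κ)
    (hF : ∀ᶠ i in L, Continuous (F i)) (hlow : ∀ᶠ i in L, ∀ z, κ * (|z| - 1) ≤ F i z)
    (hlim : ∀ z, Tendsto (fun i => F i z) L (𝓝 (f z))) :
    Tendsto (fun i => ∫ z, Real.exp (-F i z)) L (𝓝 (∫ z, Real.exp (-f z))) := by
  refine tendsto_integral_filter_of_dominated_convergence
    (fun z => Real.exp κ * Real.exp (-(κ * |z|))) ?_ ?_
    ((integrable_exp_neg_mul_abs hκ).const_mul _) ?_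
  · exact hF.mono fun i hi => (Real.continuous_exp.comp hi.neg).aestronglyMeasurable
  · filter_upwards [hlow] with i hi
    refine Eventually.of_forall fun z => ?_
    rw [Real.norm_eq_abs, Real.abs_exp, ← Real.exp_add, Real.exp_le_exp]
    linarith [hi z]
  · exact Eventually.of_forall fun z => (Real.continuous_exp.tendsto _).comp (hlim z).neg

theorem ConvexOn.mul_le_comp_mul_of_one_le {V : ℝ → ℝ} (hV : ConvexOn ℝ univ V) (hV0 : V 0 = 0)
    {t : ℝ} (ht : 1 ≤ t) (x : ℝ) : t * V x ≤ V (t * x) := by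
  have ht0 : 0 < t := by linarith
  have h := hV.2 (mem_univ (t * x)) (mem_univ 0) (inv_nonneg.2 ht0.le)
    (sub_nonneg.2 (inv_le_one_of_one_le₀ ht)) (by ring)
  simp only [smul_eq_mul, mul_zero, add_zero, hV0, inv_mul_cancel_left₀ ht0.ne'] at h
  rwa [← le_div_iff₀' ht0, div_eq_inv_mul]

theorem tendsto_rpow_nhdsGT_zero {p : ℝ} (hp : 0 < p) :
    Tendsto (fun x : ℝ => x ^ p) (𝓝[>] 0) (𝓝[>] 0) := by
  refine tendsto_nhdsWithin_iff.2 ⟨?_, eventually_mem_nhdsWithin.mono fun x hx =>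
    Real.rpow_pos_of_pos hx p⟩
  have hcont := (Real.continuousAt_rpow_const 0 p (Or.inr hp.le)).tendsto
  rw [Real.zero_rpow hp.ne'] at hcont
  exact hcont.mono_left nhdsWithin_le_nhds

theorem tendstoUniformlyOn_Icc_of_forall_abs_le {F : ℝ → ℝ → ℝ} {g : ℝ → ℝ} {K : ℝ}
    (h : ∀ δ > (0:ℝ), ∃ l₀ > (0:ℝ), ∀ l : ℝ, 0 < l → l < l₀ →
      ∀ z : ℝ, |z| ≤ K → |F l z - g z| < δ) :
    TendstoUniformlyOn F g (𝓝[>] 0) (Icc (-K) K) := by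
  rw [Metric.tendstoUniformlyOn_iff]
  intro δ hδ
  obtain ⟨l₀, hl₀, hl⟩ := h δ hδ
  filter_upwards [Ioo_mem_nhdsGT hl₀] with l hl' z hz
  rw [dist_comm, Real.dist_eq]
  exact hl l hl'.1 hl'.2 z (abs_le.2 hz)

section RescaledPotential

variable {V : ℝ → ℝ} {α : ℝ}

theorem div_rpow_eq_intervalIntegral_deriv (hV : ContDiff ℝ 1 V) (hV0 : V 0 = 0) {l : ℝ}
    (hl : 0 < l) (z : ℝ) :
    V (l * z) / l ^ (2 + α) = ∫ t in 0..z, deriv V (l * t) / l ^ (1 + α) := by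
  have hFTC : ∫ t in 0..z, deriv V (l * t) = V (l * z) / l := by
    rw [intervalIntegral.integral_comp_mul_left (deriv V) hl.ne', mul_zero,
      intervalIntegral.integral_deriv_eq_sub
        (fun x _ => (hV.differentiable one_ne_zero).differentiableAt)
        ((hV.continuous_deriv le_rfl).intervalIntegrable _ _),
      hV0, sub_zero, smul_eq_mul, inv_mul_eq_div]
  rw [intervalIntegral.integral_div, hFTC, div_div, show (2:ℝ) + α = 1 + α + 1 by ring,
    Real.rpow_add_one hl.ne', mul_comm l (l ^ (1 + α))]

theorem tendsto_comp_mul_div_rpow_of_tendstoUniformlyOn (hα : -2 < α) (hV : ContDiff ℝ 1 V)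
    (hV0 : V 0 = 0) {C₀ z : ℝ} (hz : 0 ≤ z)
    (hunif : TendstoUniformlyOn (fun l t => deriv V (l * t) / l ^ (1 + α))
      (fun t => C₀ * t ^ (1 + α)) (𝓝[>] 0) (Icc 0 z)) :
    Tendsto (fun l => V (l * z) / l ^ (2 + α)) (𝓝[>] 0) (𝓝 (C₀ * z ^ (2 + α) / (2 + α))) := by
  have hlim : ∫ t in 0..z, C₀ * t ^ (1 + α) = C₀ * z ^ (2 + α) / (2 + α) := by
    rw [intervalIntegral.integral_const_mul, integral_rpow (Or.inl (by linarith)),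
      show 1 + α + 1 = 2 + α by ring, Real.zero_rpow (by linarith : (0:ℝ) < 2 + α).ne',
      sub_zero, mul_div_assoc]
  rw [← hlim]
  refine (TendstoUniformlyOn.tendsto_intervalIntegral_of_continuousOn
    (F := fun l t => deriv V (l * t) / l ^ (1 + α)) ?_ ?_).congr' ?_
  · exact Eventually.of_forall fun l =>
      (((hV.continuous_deriv le_rfl).comp (continuous_const_mul l)).div_const _).continuousOn
  · rwa [uIcc_of_le hz]
  · filter_upwards [self_mem_nhdsWithin] with l hl
    exact (div_rpow_eq_intervalIntegral_deriv hV hV0 hl z).symm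

theorem eventually_mul_abs_sub_one_le_div_rpow (hconv : ConvexOn ℝ univ V)
    (heven : ∀ z, V (-z) = V z) (hV0 : V 0 = 0) (hVnn : ∀ z, 0 ≤ V z) {p κ : ℝ} (hκ : 0 ≤ κ)
    (h : ∀ᶠ l in 𝓝[>] 0, κ ≤ V l / l ^ p) :
    ∀ᶠ l in 𝓝[>] (0:ℝ), ∀ z, κ * (|z| - 1) ≤ V (l * z) / l ^ p := by
  filter_upwards [h, self_mem_nhdsWithin] with l hκl (hl : 0 < l) z
  have hlp : 0 < l ^ p := Real.rpow_pos_of_pos hl p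
  rcases le_or_gt |z| 1 with hz | hz
  · exact (mul_nonpos_of_nonneg_of_nonpos hκ (by linarith)).trans (div_nonneg (hVnn _) hlp.le)
  have hVz : V (l * z) = V (|z| * l) := by
    rcases abs_choice z with h | h <;> simp [h, heven, mul_comm]
  calc κ * (|z| - 1) ≤ |z| * (V l / l ^ p) := by nlinarith
    _ = |z| * V l / l ^ p := by ring
    _ ≤ V (l * z) / l ^ p := by
      rw [hVz]
      exact div_le_div_of_nonneg_right (hconv.mul_le_comp_mul_of_one_le hV0 hz.le l) hlp.le

theorem tendsto_comp_mul_div_rpow_of_abs_deriv_sub_lt (hα : -1 < α) (hV : ContDiff ℝ 1 V)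
    (heven : ∀ z, V (-z) = V z) (hV0 : V 0 = 0) {C₀ : ℝ}
    (hloc : ∀ K > (0:ℝ), ∀ δ > (0:ℝ), ∃ l₀ > (0:ℝ), ∀ l : ℝ, 0 < l → l < l₀ →
      ∀ z : ℝ, |z| ≤ K →
        |deriv V (l * z) / l ^ (1 + α) - C₀ * |z| ^ (1 + α) * Real.sign z| < δ) (z : ℝ) :
    Tendsto (fun l => V (l * z) / l ^ (2 + α)) (𝓝[>] 0) (𝓝 (C₀ * |z| ^ (2 + α) / (2 + α))) := by
  have hunif := (tendstoUniformlyOn_Icc_of_forall_abs_le (hloc (|z| + 1) (by positivity))).mono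
    (Icc_subset_Icc (by linarith [abs_nonneg z]) (by linarith) : Icc 0 |z| ⊆ _)
  refine (tendsto_comp_mul_div_rpow_of_tendstoUniformlyOn (by linarith) hV hV0 (abs_nonneg z)
    (hunif.congr_right fun t ht => ?_)).congr fun l => ?_
  · rcases ht.1.eq_or_lt with rfl | ht0
    · simp [Real.zero_rpow (by linarith : (0:ℝ) < 1 + α).ne']
    · simp [abs_of_pos ht0, Real.sign_of_pos ht0]
  · rcases abs_choice z with h | h <;> simp [h, heven]

theorem tendsto_integral_exp_neg_mul_comp_mul_div_rpow (hconv : ConvexOn ℝ univ V)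
    (heven : ∀ z, V (-z) = V z) (hV0 : V 0 = 0) (hVnn : ∀ z, 0 ≤ V z) (hVc : Continuous V)
    {p c : ℝ} {g : ℝ → ℝ} (hc : 0 < c) (hg : 0 < g 1)
    (hlim : ∀ z, Tendsto (fun l => V (l * z) / l ^ p) (𝓝[>] 0) (𝓝 (g z))) :
    Tendsto (fun l => ∫ z, Real.exp (-(c * (V (l * z) / l ^ p)))) (𝓝[>] 0)
      (𝓝 (∫ z, Real.exp (-(c * g z)))) := by
  have hlow := eventually_mul_abs_sub_one_le_div_rpow hconv heven hV0 hVnn (half_pos hg).le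
    (by simpa using (hlim 1).eventually (le_mem_nhds (half_lt_self hg)))
  refine tendsto_integral_exp_neg_of_forall_mul_abs_sub_one_le (mul_pos hc (half_pos hg))
    (Eventually.of_forall fun l => by fun_prop) (hlow.mono fun l hl z => ?_)
    fun z => (hlim z).const_mul c
  simpa [mul_assoc] using mul_le_mul_of_nonneg_left (hl z) hc.le

end RescaledPotential

theorem stmt_8_general
    (V : ℝ → ℝ) (C₀ α : ℝ)
    (hC₀ : 0 < C₀) (hα : 0 < α)
    (hV2 : ContDiff ℝ 2 V) (hconv : ConvexOn ℝ Set.univ V)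
    (heven : ∀ z : ℝ, V (-z) = V z) (hV0 : V 0 = 0) (hVnn : ∀ z : ℝ, 0 ≤ V z)
    (hloc : ∀ K > (0:ℝ), ∀ δ > (0:ℝ), ∃ l₀ > (0:ℝ), ∀ l : ℝ, 0 < l → l < l₀ →
      ∀ z : ℝ, |z| ≤ K →
        |deriv V (l * z) / l ^ (1 + α) - C₀ * |z| ^ (1 + α) * Real.sign z| < δ) :
    Tendsto
      (fun ε : ℝ => (∫ y : ℝ, Real.exp (-2 * V y / ε)) / ε ^ (1 / (2 + α)))
      (nhdsWithin 0 (Set.Ioi 0))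
      (nhds (∫ z : ℝ, Real.exp (-2 * C₀ * |z| ^ (2 + α) / (2 + α)))) := by
  have h2α : 0 < 2 + α := by linarith
  have hresc := tendsto_comp_mul_div_rpow_of_abs_deriv_sub_lt (by linarith) (hV2.of_le one_le_two)
    heven hV0 hloc
  have hlap := tendsto_integral_exp_neg_mul_comp_mul_div_rpow hconv heven hV0 hVnn hV2.continuous
    two_pos (by simpa using div_pos hC₀ h2α) hresc
  convert (hlap.comp (tendsto_rpow_nhdsGT_zero (one_div_pos.2 h2α))).congr' ?_ using 3
  · ext z
    congr 1
    ring
  filter_upwards [self_mem_nhdsWithin] with ε (hε : 0 < ε)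
  have hbε : (ε ^ (1 / (2 + α))) ^ (2 + α) = ε := by
    rw [one_div, Real.rpow_inv_rpow hε.le h2α.ne']
  simp only [Function.comp_apply, hbε]
  rw [Measure.integral_comp_mul_left (fun y => Real.exp (-(2 * (V y / ε)))),
    abs_of_pos (inv_pos.2 (Real.rpow_pos_of_pos hε _)), smul_eq_mul, inv_mul_eq_div]
  congr 2 with y
  congr 1
  ring

/-- convergence of the normalizing constants `C_ε/b_ε → C`. -/
theorem stmt_8
    (V : ℝ → ℝ) (C₀ α c₀ R₀ β : ℝ)
    (hC₀ : 0 < C₀) (hα : 0 < α) (hc₀ : 0 < c₀) (hR₀ : 0 < R₀) (hβ : -1 < β)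
    (hV2 : ContDiff ℝ 2 V) (hconv : ConvexOn ℝ Set.univ V)
    (heven : ∀ z : ℝ, V (-z) = V z) (hV0 : V 0 = 0) (hVnn : ∀ z : ℝ, 0 ≤ V z)
    (hloc : ∀ K > (0:ℝ), ∀ δ > (0:ℝ), ∃ l₀ > (0:ℝ), ∀ l : ℝ, 0 < l → l < l₀ →
      ∀ z : ℝ, |z| ≤ K →
        |deriv V (l * z) / l ^ (1 + α) - C₀ * |z| ^ (1 + α) * Real.sign z| < δ)
    (hgrow : ∀ z : ℝ, R₀ ≤ z → c₀ * z ^ (1 + β) ≤ deriv V z) :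
    Tendsto
      (fun ε : ℝ => (∫ y : ℝ, Real.exp (-2 * V y / ε)) / ε ^ (1 / (2 + α)))
      (nhdsWithin 0 (Set.Ioi 0))
      (nhds (∫ z : ℝ, Real.exp (-2 * C₀ * |z| ^ (2 + α) / (2 + α)))) :=
  stmt_8_general V C₀ α hC₀ hα hV2 hconv heven hV0 hVnn hloc
end

section
/- Let V : ℝ → [0,∞) be C², convex, even with V(0)=0, satisfying the local behavior hypothesis (with constants C₀ > 0, α > 0) and the polynomial growth hypothesis V'(z) ≥ c z^{1+α} for z ≥ R. Let b_ε := ε^{1/(2+α)}, C_ε := ∫_ℝ e^{−2V(y)/ε} dy, ρ(z) := C^{−1} e^{−2C₀|z|^{2+α}/(2+α)} with C the corresponding normalizing constant, and ρ_ε(z) := (b_ε/C_ε) e^{−2V(b_ε z)/ε}. Then ρ_ε → ρ pointwise on ℝ as ε → 0, and consequently ∫_ℝ |ρ_ε(z) − ρ(z)| dz → 0; in particular the total variation distance between the probability measures ρ_ε(z)dz and ρ(z)dz tends to 0. -/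
open MeasureTheory Filter

/-- Total variation distance between two measures: `sup_B |μ(B) − ν(B)|`. -/
noncomputable def dTV {S : Type*} [MeasurableSpace S] (μ ν : Measure S) : ℝ :=
  ⨆ B : {B : Set S // MeasurableSet B}, |(μ B.1).toReal - (ν B.1).toReal|

theorem integrable_exp_neg_abs (a : ℝ) (ha : 0 < a) :
    Integrable (fun y : ℝ => Real.exp (-a * |y|)) := by
  set f : ℝ → ℝ := fun y => Real.exp (-a * |y|) with hf
  have hIci : IntegrableOn f (Set.Ici 0) := by
    rw [integrableOn_Ici_iff_integrableOn_Ioi]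
    exact (exp_neg_integrableOn_Ioi 0 ha).congr_fun
      (fun y hy => by show Real.exp (-a * y) = Real.exp (-a * |y|)
                      rw [abs_of_pos (Set.mem_Ioi.mp hy)]) measurableSet_Ioi
  rw [← integrableOn_univ, ← Set.Iic_union_Ioi (a := (0:ℝ)), integrableOn_union]
  refine ⟨?_, hIci.mono_set Set.Ioi_subset_Ici_self⟩
  have h4 := (hIci.integrable_indicator measurableSet_Ici).comp_neg
  have h5 : Integrable ((Set.Iic (0:ℝ)).indicator f) := by
    refine h4.congr (Eventually.of_forall fun y => ?_)
    show (Set.Ici (0:ℝ)).indicator f (-y) = (Set.Iic (0:ℝ)).indicator f y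
    by_cases hy : y ≤ 0
    · rw [Set.indicator_of_mem (by simpa using hy : -y ∈ Set.Ici (0:ℝ)),
        Set.indicator_of_mem (by simpa using hy : y ∈ Set.Iic (0:ℝ))]
      simp [hf, abs_neg]
    · rw [Set.indicator_of_notMem (show -y ∉ Set.Ici (0:ℝ) by simpa using hy),
        Set.indicator_of_notMem (show y ∉ Set.Iic (0:ℝ) by simpa using hy)]
  exact (integrable_indicator_iff measurableSet_Iic).mp h5

theorem aux_W (V : ℝ → ℝ) (C₀ α : ℝ) (hα : 0 < α)
    (hV2 : ContDiff ℝ 2 V) (hV0 : V 0 = 0)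
    (hloc : ∀ K > (0:ℝ), ∀ δ > (0:ℝ), ∃ l₀ > (0:ℝ), ∀ l : ℝ, 0 < l → l < l₀ →
      ∀ z : ℝ, |z| ≤ K →
        |deriv V (l * z) / l ^ (1 + α) - C₀ * |z| ^ (1 + α) * Real.sign z| < δ)
    (z : ℝ) (hz : 0 ≤ z) :
    Tendsto (fun l : ℝ => V (l * z) / l ^ (2 + α)) (nhdsWithin 0 (Set.Ioi 0))
      (nhds (C₀ * z ^ (2 + α) / (2 + α))) := by
  have hVd : Differentiable ℝ V := hV2.differentiable (by norm_num)
  have hdc : Continuous (deriv V) := hV2.continuous_deriv (by norm_num)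
  have hrc : Continuous (fun u : ℝ => C₀ * u ^ (1 + α)) := by
    apply continuous_const.mul
    exact continuous_iff_continuousAt.2 fun x =>
      Real.continuousAt_rpow_const x (1 + α) (Or.inr (by linarith))
  rw [Metric.tendsto_nhds]
  intro δ hδ
  obtain ⟨l₀, hl₀, H⟩ := hloc (z + 1) (by linarith) (δ / (2 * (z + 1))) (by positivity)
  filter_upwards [Ioo_mem_nhdsGT_of_mem ⟨le_refl (0:ℝ), hl₀⟩] with l hl
  obtain ⟨hl1, hl2⟩ := hl
  have hl1' : l ≠ 0 := ne_of_gt hl1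
  have hFTC : ∫ x in (0:ℝ)..(l * z), deriv V x = V (l * z) := by
    rw [intervalIntegral.integral_deriv_eq_sub (fun x _ => hVd.differentiableAt)
      (hdc.intervalIntegrable _ _), hV0, sub_zero]
  have hsub : ∫ u in (0:ℝ)..z, deriv V (l * u) = l⁻¹ * V (l * z) := by
    rw [intervalIntegral.integral_comp_mul_left _ hl1', mul_zero, hFTC, smul_eq_mul]
  have hpow : l ^ ((2:ℝ) + α) = l ^ (1 + α) * l := by
    rw [show (2:ℝ) + α = (1 + α) + 1 by ring, Real.rpow_add hl1, Real.rpow_one]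
  have key : V (l * z) / l ^ ((2:ℝ) + α) = ∫ u in (0:ℝ)..z, deriv V (l * u) / l ^ ((1:ℝ) + α) := by
    rw [intervalIntegral.integral_div, hsub, hpow]
    field_simp
  have e3 : C₀ * z ^ ((2:ℝ) + α) / (2 + α) = ∫ u in (0:ℝ)..z, C₀ * u ^ ((1:ℝ) + α) := by
    rw [intervalIntegral.integral_const_mul, integral_rpow (Or.inl (by linarith))]
    rw [Real.zero_rpow (by positivity : (1:ℝ) + α + 1 ≠ 0)]
    rw [show (1:ℝ) + α + 1 = 2 + α by ring]
    ring
  have int1 : IntervalIntegrable (fun u : ℝ => deriv V (l * u) / l ^ ((1:ℝ) + α)) volume 0 z := by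
    apply Continuous.intervalIntegrable
    fun_prop
  have int2 : IntervalIntegrable (fun u : ℝ => C₀ * u ^ ((1:ℝ) + α)) volume 0 z :=
    hrc.intervalIntegrable _ _
  rw [Real.dist_eq, key, e3, ← intervalIntegral.integral_sub int1 int2]
  have hbd : ∀ u ∈ Set.uIoc (0:ℝ) z,
      ‖deriv V (l * u) / l ^ ((1:ℝ) + α) - C₀ * u ^ ((1:ℝ) + α)‖ ≤ δ / (2 * (z + 1)) := by
    intro u hu
    rw [Set.uIoc_of_le hz] at hu
    obtain ⟨hu1, hu2⟩ := hu
    have := H l hl1 hl2 u (by rw [abs_of_pos hu1]; linarith)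
    rw [Real.sign_of_pos hu1, mul_one, abs_of_pos hu1] at this
    exact le_of_lt (by simpa using this)
  calc ‖∫ u in (0:ℝ)..z, (deriv V (l * u) / l ^ ((1:ℝ) + α) - C₀ * u ^ ((1:ℝ) + α))‖
      ≤ δ / (2 * (z + 1)) * |z - 0| :=
        intervalIntegral.norm_integral_le_of_norm_le_const hbd
    _ < δ := by
        rw [sub_zero, abs_of_nonneg hz]
        rw [div_mul_eq_mul_div, div_lt_iff₀ (by positivity)]
        nlinarith

set_option maxHeartbeats 1000000 in
/-- pointwise convergence of the rescaled invariant densities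
and, by Scheffé's lemma, L¹ and total-variation convergence. -/
theorem stmt_9
    (V : ℝ → ℝ) (C₀ α c R : ℝ)
    (hC₀ : 0 < C₀) (hα : 0 < α) (hc : 0 < c) (hR : 0 < R)
    (hV2 : ContDiff ℝ 2 V) (hconv : ConvexOn ℝ Set.univ V)
    (heven : ∀ z : ℝ, V (-z) = V z) (hV0 : V 0 = 0) (hVnn : ∀ z : ℝ, 0 ≤ V z)
    (hloc : ∀ K > (0:ℝ), ∀ δ > (0:ℝ), ∃ l₀ > (0:ℝ), ∀ l : ℝ, 0 < l → l < l₀ →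
      ∀ z : ℝ, |z| ≤ K →
        |deriv V (l * z) / l ^ (1 + α) - C₀ * |z| ^ (1 + α) * Real.sign z| < δ)
    (hgrow : ∀ z : ℝ, R ≤ z → c * z ^ (1 + α) ≤ deriv V z)
    (Cnorm : ℝ)
    (hC : Cnorm = ∫ z : ℝ, Real.exp (-2 * C₀ * |z| ^ (2 + α) / (2 + α)))
    (ρ0 : ℝ → ℝ)
    (hρ0 : ∀ z : ℝ, ρ0 z = Cnorm⁻¹ * Real.exp (-2 * C₀ * |z| ^ (2 + α) / (2 + α)))
    (ρ : ℝ → ℝ → ℝ)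
    (hρ : ∀ ε z : ℝ, ρ ε z =
      (ε ^ (1 / (2 + α)) / ∫ y : ℝ, Real.exp (-2 * V y / ε)) *
        Real.exp (-2 * V (ε ^ (1 / (2 + α)) * z) / ε)) :
    (∀ z : ℝ, Tendsto (fun ε => ρ ε z) (nhdsWithin 0 (Set.Ioi 0)) (nhds (ρ0 z))) ∧
    Tendsto (fun ε => ∫ z : ℝ, |ρ ε z - ρ0 z|) (nhdsWithin 0 (Set.Ioi 0)) (nhds 0) ∧
    Tendsto
      (fun ε => dTV
        (volume.withDensity fun z => ENNReal.ofReal (ρ ε z))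
        (volume.withDensity fun z => ENNReal.ofReal (ρ0 z)))
      (nhdsWithin 0 (Set.Ioi 0)) (nhds 0) := by
  have hp : (0:ℝ) < 2 + α := by linarith
  have hq : (0:ℝ) < 1 / (2 + α) := by positivity
  have hVc : Continuous V := hV2.continuous
  have hb_pos : ∀ ε : ℝ, 0 < ε → 0 < ε ^ (1 / (2 + α)) :=
    fun ε hε => Real.rpow_pos_of_pos hε _
  have hb_tend : Tendsto (fun ε : ℝ => ε ^ (1 / (2 + α)))
      (nhdsWithin 0 (Set.Ioi 0)) (nhdsWithin 0 (Set.Ioi 0)) := by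
    rw [tendsto_nhdsWithin_iff]
    constructor
    · have hcont : ContinuousAt (fun x : ℝ => x ^ (1 / (2 + α))) 0 :=
        Real.continuousAt_rpow_const 0 _ (Or.inr hq.le)
      have h := hcont.tendsto
      rw [Real.zero_rpow (ne_of_gt hq)] at h
      exact h.mono_left nhdsWithin_le_nhds
    · filter_upwards [self_mem_nhdsWithin] with ε hε
      exact hb_pos ε hε
  -- pointwise limit of the exponent
  have hA : ∀ z : ℝ, Tendsto (fun ε : ℝ => V (ε ^ (1 / (2 + α)) * z) / ε)
      (nhdsWithin 0 (Set.Ioi 0)) (nhds (C₀ * |z| ^ (2 + α) / (2 + α))) := by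
    intro z
    have h1 := (aux_W V C₀ α hα hV2 hV0 hloc |z| (abs_nonneg z)).comp hb_tend
    apply h1.congr'
    filter_upwards [self_mem_nhdsWithin] with ε hε
    have hε' : (0:ℝ) < ε := hε
    have hpow : (ε ^ (1 / (2 + α))) ^ ((2:ℝ) + α) = ε := by
      rw [← Real.rpow_mul hε'.le, show 1 / (2 + α) * (2 + α) = (1:ℝ) by field_simp,
        Real.rpow_one]
    have habs : V (ε ^ (1 / (2 + α)) * |z|) = V (ε ^ (1 / (2 + α)) * z) := by
      rcases abs_cases z with ⟨h, _⟩ | ⟨h, _⟩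
      · rw [h]
      · rw [h, mul_neg, heven]
    show V (ε ^ (1 / (2 + α)) * |z|) / (ε ^ (1 / (2 + α))) ^ ((2:ℝ) + α)
        = V (ε ^ (1 / (2 + α)) * z) / ε
    rw [hpow, habs]
  -- pointwise limit of the exponential
  have hExp : ∀ z : ℝ, Tendsto (fun ε : ℝ => Real.exp (-2 * V (ε ^ (1 / (2 + α)) * z) / ε))
      (nhdsWithin 0 (Set.Ioi 0)) (nhds (Real.exp (-2 * C₀ * |z| ^ (2 + α) / (2 + α)))) := by
    intro z
    have hcont : Continuous fun x : ℝ => Real.exp (-2 * x) :=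
      Real.continuous_exp.comp (continuous_const.mul continuous_id)
    have h2 := (hcont.tendsto _).comp (hA z)
    have he : Real.exp (-2 * (C₀ * |z| ^ ((2:ℝ) + α) / (2 + α)))
        = Real.exp (-2 * C₀ * |z| ^ ((2:ℝ) + α) / (2 + α)) := by ring_nf
    rw [he] at h2
    apply h2.congr
    intro ε
    show Real.exp (-2 * (V (ε ^ (1 / (2 + α)) * z) / ε))
        = Real.exp (-2 * V (ε ^ (1 / (2 + α)) * z) / ε)
    rw [mul_div_assoc]
  -- convexity scaling
  have hscale : ∀ x t : ℝ, 1 ≤ t → t * V x ≤ V (t * x) := by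
    intro x t ht
    have ht0 : 0 < t := lt_of_lt_of_le one_pos ht
    have h := hconv.2 (Set.mem_univ (t * x)) (Set.mem_univ (0:ℝ))
      (show (0:ℝ) ≤ 1 / t by positivity)
      (show (0:ℝ) ≤ 1 - 1 / t by
        have h1 : 1 / t ≤ 1 := by rw [div_le_one ht0]; exact ht
        linarith)
      (show 1 / t + (1 - 1 / t) = 1 by ring)
    simp only [smul_eq_mul, hV0, mul_zero, add_zero] at h
    rw [show 1 / t * (t * x) = x by field_simp] at h
    calc t * V x ≤ t * (1 / t * V (t * x)) := mul_le_mul_of_nonneg_left h ht0.le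
      _ = V (t * x) := by field_simp
  obtain ⟨κ, hκpos, hκlt⟩ : ∃ κ : ℝ, 0 < κ ∧ κ < C₀ / (2 + α) :=
    ⟨C₀ / (2 * (2 + α)), by positivity, by
      rw [div_lt_div_iff₀ (by positivity) hp]
      nlinarith⟩
  have hev1 : ∀ᶠ ε in nhdsWithin 0 (Set.Ioi 0),
      κ ≤ V (ε ^ (1 / (2 + α)) * 1) / ε := by
    have h1 := hA 1
    have h2 : κ < C₀ * |(1:ℝ)| ^ ((2:ℝ) + α) / (2 + α) := by
      rw [abs_one, Real.one_rpow, mul_one]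
      exact hκlt
    exact h1.eventually (eventually_ge_nhds h2)
  -- the dominating function
  have hgpos : ∀ y : ℝ, 0 < Real.exp (2 * κ) * Real.exp (-(2 * κ) * |y|) :=
    fun y => mul_pos (Real.exp_pos _) (Real.exp_pos _)
  have hg_int : Integrable (fun y : ℝ => Real.exp (2 * κ) * Real.exp (-(2 * κ) * |y|)) :=
    (integrable_exp_neg_abs (2 * κ) (by positivity)).const_mul _
  have hVeven : ∀ b y : ℝ, V (b * y) = V (b * |y|) := by
    intro b y
    rcases abs_cases y with ⟨h, _⟩ | ⟨h, _⟩
    · rw [h]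
    · rw [h, mul_neg, heven]
  have hdom : ∀ᶠ ε in nhdsWithin 0 (Set.Ioi 0), ∀ y : ℝ,
      ‖Real.exp (-2 * V (ε ^ (1 / (2 + α)) * y) / ε)‖
        ≤ Real.exp (2 * κ) * Real.exp (-(2 * κ) * |y|) := by
    filter_upwards [hev1, self_mem_nhdsWithin] with ε hκε hε
    intro y
    have hε' : (0:ℝ) < ε := hε
    rw [Real.norm_eq_abs, abs_of_pos (Real.exp_pos _), ← Real.exp_add, Real.exp_le_exp]
    rw [hVeven]
    rcases le_or_gt |y| 1 with h1 | h1
    · have hnum : 0 ≤ V (ε ^ (1 / (2 + α)) * |y|) := hVnn _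
      have hle : -2 * V (ε ^ (1 / (2 + α)) * |y|) / ε ≤ 0 := by
        apply div_nonpos_of_nonpos_of_nonneg _ hε'.le
        nlinarith
      nlinarith [abs_nonneg y]
    · have hsc := hscale (ε ^ (1 / (2 + α)) * 1) |y| h1.le
      have heq : |y| * (ε ^ (1 / (2 + α)) * 1) = ε ^ (1 / (2 + α)) * |y| := by ring
      rw [heq] at hsc
      have h3 : κ * ε ≤ V (ε ^ (1 / (2 + α)) * 1) := by
        rw [le_div_iff₀ hε'] at hκε
        linarith
      have h4 : |y| * (κ * ε) ≤ V (ε ^ (1 / (2 + α)) * |y|) :=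
        le_trans (by nlinarith [abs_nonneg y]) hsc
      rw [div_le_iff₀ hε']
      nlinarith [mul_pos hκpos hε', abs_nonneg y]
  have hmeas_exp : ∀ ε : ℝ, AEStronglyMeasurable
      (fun y : ℝ => Real.exp (-2 * V (ε ^ (1 / (2 + α)) * y) / ε)) volume := by
    intro ε
    apply Continuous.aestronglyMeasurable
    fun_prop
  -- the limit of the rescaled partition function
  have hD : Tendsto (fun ε : ℝ => ∫ y : ℝ, Real.exp (-2 * V (ε ^ (1 / (2 + α)) * y) / ε))
      (nhdsWithin 0 (Set.Ioi 0)) (nhds Cnorm) := by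
    rw [hC]
    exact tendsto_integral_filter_of_dominated_convergence _
      (Eventually.of_forall hmeas_exp)
      (hdom.mono fun ε h => ae_of_all _ h)
      hg_int
      (ae_of_all _ fun y => hExp y)
  -- integrability and positivity of the limit density numerator
  have hf0_cont : Continuous fun z : ℝ => Real.exp (-2 * C₀ * |z| ^ ((2:ℝ) + α) / (2 + α)) := by
    apply Real.continuous_exp.comp
    apply Continuous.div_const
    exact continuous_const.mul (continuous_abs.rpow_const (fun x => Or.inr hp.le))
  have hf0_int : Integrable (fun z : ℝ => Real.exp (-2 * C₀ * |z| ^ ((2:ℝ) + α) / (2 + α))) := by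
    apply hg_int.mono hf0_cont.aestronglyMeasurable
    apply ae_of_all
    intro z
    rw [Real.norm_eq_abs, abs_of_pos (Real.exp_pos _), Real.norm_eq_abs,
      abs_of_pos (hgpos z), ← Real.exp_add, Real.exp_le_exp]
    rcases le_or_gt |z| 1 with h1 | h1
    · have h0 : (0:ℝ) ≤ |z| ^ ((2:ℝ) + α) := Real.rpow_nonneg (abs_nonneg z) _
      have hle : -2 * C₀ * |z| ^ ((2:ℝ) + α) / (2 + α) ≤ 0 := by
        apply div_nonpos_of_nonpos_of_nonneg _ hp.le
        nlinarith
      nlinarith [abs_nonneg z]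
    · have h5 : |z| ≤ |z| ^ ((2:ℝ) + α) := by
        calc |z| = |z| ^ (1:ℝ) := (Real.rpow_one _).symm
          _ ≤ |z| ^ ((2:ℝ) + α) := Real.rpow_le_rpow_of_exponent_le h1.le (by linarith)
      rw [div_le_iff₀ hp]
      have hκp : κ * (2 + α) < C₀ := by
        rw [lt_div_iff₀ hp] at hκlt
        exact hκlt
      nlinarith [mul_pos hκpos hp, abs_nonneg z, hκp,
        mul_le_mul_of_nonneg_left h5 hC₀.le]
  have hCpos : 0 < Cnorm := by
    rw [hC]
    rw [integral_pos_iff_support_of_nonneg_ae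
      (ae_of_all _ fun z => (Real.exp_pos _).le) hf0_int]
    have hs : Function.support
        (fun z : ℝ => Real.exp (-2 * C₀ * |z| ^ ((2:ℝ) + α) / (2 + α))) = Set.univ :=
      Set.eq_univ_of_forall fun z => (Real.exp_pos _).ne'
    rw [hs, Real.volume_univ]
    exact ENNReal.zero_lt_top
  -- change of variables for the partition function
  have hCD : ∀ ε : ℝ, 0 < ε → (∫ y : ℝ, Real.exp (-2 * V y / ε))
      = ε ^ (1 / (2 + α)) * ∫ y : ℝ, Real.exp (-2 * V (ε ^ (1 / (2 + α)) * y) / ε) := by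
    intro ε hε
    have hb := hb_pos ε hε
    have h := MeasureTheory.Measure.integral_comp_mul_left
      (fun y => Real.exp (-2 * V y / ε)) (ε ^ (1 / (2 + α)))
    simp only [smul_eq_mul] at h
    rw [h, abs_of_pos (inv_pos.2 hb)]
    field_simp
  -- rewrite ρ
  have hρ_eq : ∀ᶠ ε in nhdsWithin 0 (Set.Ioi 0), ∀ z : ℝ,
      ρ ε z = Real.exp (-2 * V (ε ^ (1 / (2 + α)) * z) / ε)
        * (∫ y : ℝ, Real.exp (-2 * V (ε ^ (1 / (2 + α)) * y) / ε))⁻¹ := by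
    filter_upwards [self_mem_nhdsWithin] with ε hε z
    rw [hρ, hCD ε hε, div_mul_cancel_left₀ (ne_of_gt (hb_pos ε hε)), mul_comm]
  -- first conjunct
  have hpt : ∀ z : ℝ, Tendsto (fun ε => ρ ε z) (nhdsWithin 0 (Set.Ioi 0)) (nhds (ρ0 z)) := by
    intro z
    have h := (hExp z).mul (hD.inv₀ (ne_of_gt hCpos))
    rw [show Real.exp (-2 * C₀ * |z| ^ ((2:ℝ) + α) / (2 + α)) * Cnorm⁻¹ = ρ0 z by
      rw [hρ0, mul_comm]] at h
    apply h.congr'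
    filter_upwards [hρ_eq] with ε hεeq
    exact (hεeq z).symm
  have hDpos : ∀ᶠ ε in nhdsWithin 0 (Set.Ioi 0),
      0 < ∫ y : ℝ, Real.exp (-2 * V (ε ^ (1 / (2 + α)) * y) / ε) :=
    hD.eventually (eventually_gt_nhds hCpos)
  have hint_exp : ∀ᶠ ε in nhdsWithin 0 (Set.Ioi 0),
      Integrable (fun z : ℝ => Real.exp (-2 * V (ε ^ (1 / (2 + α)) * z) / ε)) := by
    filter_upwards [hdom] with ε hdε
    exact hg_int.mono (hmeas_exp ε) (ae_of_all _ fun y => by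
      calc ‖Real.exp (-2 * V (ε ^ (1 / (2 + α)) * y) / ε)‖
          ≤ Real.exp (2 * κ) * Real.exp (-(2 * κ) * |y|) := hdε y
        _ = ‖Real.exp (2 * κ) * Real.exp (-(2 * κ) * |y|)‖ := by
            rw [Real.norm_eq_abs, abs_of_pos (hgpos y)])
  have hρ_int : ∀ᶠ ε in nhdsWithin 0 (Set.Ioi 0), Integrable (ρ ε) := by
    filter_upwards [hint_exp, hρ_eq] with ε h1 h2
    exact (h1.mul_const _).congr (ae_of_all _ fun z => (h2 z).symm)
  have hρ_nonneg : ∀ᶠ ε in nhdsWithin 0 (Set.Ioi 0), ∀ z : ℝ, 0 ≤ ρ ε z := by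
    filter_upwards [hρ_eq, hDpos] with ε h1 h2
    intro z
    rw [h1 z]
    positivity
  have hρ0_int : Integrable ρ0 :=
    (hf0_int.const_mul Cnorm⁻¹).congr (ae_of_all _ fun z => (hρ0 z).symm)
  have hρ0_nonneg : ∀ z : ℝ, 0 ≤ ρ0 z := fun z => by
    rw [hρ0]
    positivity
  have hρ_one : ∀ᶠ ε in nhdsWithin 0 (Set.Ioi 0), ∫ z : ℝ, ρ ε z = 1 := by
    filter_upwards [hρ_eq, hint_exp, hDpos] with ε h1 h2 h3
    rw [integral_congr_ae (ae_of_all _ h1), integral_mul_const,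
      mul_inv_cancel₀ (ne_of_gt h3)]
  have hρ0_one : ∫ z : ℝ, ρ0 z = 1 := by
    simp only [hρ0]
    rw [integral_const_mul, ← hC, inv_mul_cancel₀ (ne_of_gt hCpos)]
  have hL1 : Tendsto (fun ε => ∫ z : ℝ, |ρ ε z - ρ0 z|)
      (nhdsWithin 0 (Set.Ioi 0)) (nhds 0) := by
    have hpos_tend : Tendsto (fun ε => ∫ z : ℝ, max (ρ0 z - ρ ε z) 0)
        (nhdsWithin 0 (Set.Ioi 0)) (nhds 0) := by
      have hmeas' : ∀ᶠ ε in nhdsWithin (0:ℝ) (Set.Ioi 0), AEStronglyMeasurable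
          (fun z : ℝ => max (ρ0 z - ρ ε z) 0) volume := by
        filter_upwards [hρ_int] with ε h
        exact (hρ0_int.aestronglyMeasurable.sub h.aestronglyMeasurable).sup
          aestronglyMeasurable_const
      have hbound' : ∀ᶠ ε in nhdsWithin (0:ℝ) (Set.Ioi 0),
          ∀ᵐ z : ℝ, ‖max (ρ0 z - ρ ε z) 0‖ ≤ ρ0 z := by
        filter_upwards [hρ_nonneg] with ε hnn
        apply ae_of_all
        intro z
        rw [Real.norm_eq_abs, abs_of_nonneg (le_max_right _ _)]
        exact max_le (by linarith [hnn z]) (hρ0_nonneg z)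
      have hlim' : ∀ᵐ z : ℝ, Tendsto (fun ε => max (ρ0 z - ρ ε z) 0)
          (nhdsWithin (0:ℝ) (Set.Ioi 0)) (nhds ((0:ℝ))) := by
        apply ae_of_all
        intro z
        have h := ((tendsto_const_nhds (x := ρ0 z)
          (f := nhdsWithin (0:ℝ) (Set.Ioi 0))).sub (hpt z)).max
          (tendsto_const_nhds (x := (0:ℝ)))
        simpa using h
      have h := tendsto_integral_filter_of_dominated_convergence (μ := volume)
        (F := fun ε (z : ℝ) => max (ρ0 z - ρ ε z) 0) (f := fun _ : ℝ => (0:ℝ))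
        ρ0 hmeas' hbound' hρ0_int hlim'
      simpa using h
    have hev_eq : ∀ᶠ ε in nhdsWithin 0 (Set.Ioi 0),
        ∫ z : ℝ, |ρ ε z - ρ0 z| = 2 * ∫ z : ℝ, max (ρ0 z - ρ ε z) 0 := by
      filter_upwards [hρ_int, hρ_one, hρ_nonneg] with ε h1 h2 h3
      have hsub : Integrable (fun z => ρ ε z - ρ0 z) := h1.sub hρ0_int
      have hmax : Integrable (fun z => max (ρ0 z - ρ ε z) 0) :=
        (hρ0_int.sub h1).pos_part
      calc ∫ z : ℝ, |ρ ε z - ρ0 z|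
          = ∫ z : ℝ, ((ρ ε z - ρ0 z) + 2 * max (ρ0 z - ρ ε z) 0) := by
            apply integral_congr_ae (ae_of_all _ fun z => ?_)
            rcases le_total (ρ0 z) (ρ ε z) with h | h
            · rw [abs_of_nonneg (by linarith), max_eq_right (by linarith)]
              ring
            · rw [abs_of_nonpos (by linarith), max_eq_left (by linarith)]
              ring
        _ = (∫ z : ℝ, (ρ ε z - ρ0 z)) + 2 * ∫ z : ℝ, max (ρ0 z - ρ ε z) 0 := by
            rw [integral_add hsub (hmax.const_mul 2), integral_const_mul]
        _ = 2 * ∫ z : ℝ, max (ρ0 z - ρ ε z) 0 := by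
            rw [integral_sub h1 hρ0_int, h2, hρ0_one, sub_self, zero_add]
    have h2t : Tendsto (fun ε => 2 * ∫ z : ℝ, max (ρ0 z - ρ ε z) 0)
        (nhdsWithin 0 (Set.Ioi 0)) (nhds 0) := by
      have := hpos_tend.const_mul (2:ℝ)
      simpa using this
    exact h2t.congr' (hev_eq.mono fun ε h => h.symm)
  refine ⟨hpt, hL1, ?_⟩
  haveI : Nonempty {B : Set ℝ // MeasurableSet B} := ⟨⟨∅, MeasurableSet.empty⟩⟩
  apply tendsto_of_tendsto_of_tendsto_of_le_of_le' tendsto_const_nhds hL1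
  · apply Eventually.of_forall
    intro ε
    exact Real.iSup_nonneg fun B => abs_nonneg _
  · filter_upwards [hρ_int, hρ_nonneg] with ε h1 h2
    unfold dTV
    apply ciSup_le
    rintro ⟨B, hB⟩
    have hμ : ((volume.withDensity fun z => ENNReal.ofReal (ρ ε z)) B).toReal
        = ∫ z in B, ρ ε z := by
      rw [withDensity_apply _ hB,
        ← ofReal_integral_eq_lintegral_ofReal h1.restrict (ae_of_all _ h2),
        ENNReal.toReal_ofReal (integral_nonneg h2)]
    have hν : ((volume.withDensity fun z => ENNReal.ofReal (ρ0 z)) B).toReal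
        = ∫ z in B, ρ0 z := by
      rw [withDensity_apply _ hB,
        ← ofReal_integral_eq_lintegral_ofReal hρ0_int.restrict (ae_of_all _ hρ0_nonneg),
        ENNReal.toReal_ofReal (integral_nonneg hρ0_nonneg)]
    show |((volume.withDensity fun z => ENNReal.ofReal (ρ ε z)) B).toReal
        - ((volume.withDensity fun z => ENNReal.ofReal (ρ0 z)) B).toReal|
        ≤ ∫ z : ℝ, |ρ ε z - ρ0 z|
    rw [hμ, hν]
    calc |(∫ z in B, ρ ε z) - ∫ z in B, ρ0 z|
        = |∫ z in B, (ρ ε z - ρ0 z)| := by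
          rw [integral_sub h1.restrict hρ0_int.restrict]
      _ ≤ ∫ z in B, |ρ ε z - ρ0 z| := by
          simpa [Real.norm_eq_abs] using
            norm_integral_le_integral_norm (μ := volume.restrict B)
              (fun z => ρ ε z - ρ0 z)
      _ ≤ ∫ z : ℝ, |ρ ε z - ρ0 z| :=
          setIntegral_le_integral (h1.sub hρ0_int).abs
            (ae_of_all _ fun z => abs_nonneg _)
end

section
/- Let V be C², convex, even, V(0)=0, satisfying the local behavior hypothesis with constants C₀ > 0 and α > 0. For M > 0 there exists an even C² convex function V_M : ℝ → [0,∞) and positive constants c, C, R such that: (i) V_M(z) = V(z) for all |z| ≤ M; (ii) V_M'(z) ≥ c z^{1+α} for all z ≥ R; (iii) |V_M'(z)| ≤ C e^{z²} for all z ≥ R. In particular V_M again satisfies the regularity and local-behavior hypotheses. -/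
/-!
Glue `V''` on `[-M, M]` continuously to `V''(M) + (|t| - M) ^ α` outside and integrate twice
from `0`. The second derivative of the result is this nonnegative, even, continuous function,
so `V_M` is `C²`, convex and even, and it agrees with `V` on `[-M, M]` because
`V 0 = V' 0 = 0`. For `z ≥ M` its derivative is
`V'(M) + V''(M) (z - M) + (z - M) ^ (α + 1) / (α + 1)`, which gives the polynomial lower bound
and the (very generous) Gaussian upper bound. The local behaviour only involves `V'` near `0`,
where `V_M = V`.
-/

open Real Set intervalIntegral

section Primitive

variable {f H : ℝ → ℝ}

lemma integral_zero_neg_of_even (hf : ∀ t, f (-t) = f t) (z : ℝ) :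
    ∫ t in (0 : ℝ)..-z, f t = -∫ t in (0 : ℝ)..z, f t := by
  have h := integral_comp_neg (a := 0) (b := z) f
  simp only [hf, neg_zero] at h
  rw [h, integral_symm]

lemma integral_zero_neg_of_odd (hf : ∀ t, f (-t) = -f t) (z : ℝ) :
    ∫ t in (0 : ℝ)..-z, f t = ∫ t in (0 : ℝ)..z, f t := by
  have h := integral_comp_neg (a := 0) (b := z) f
  simp only [hf, neg_zero, intervalIntegral.integral_neg] at h
  rw [integral_symm, ← h, neg_neg]

noncomputable def doublePrimitive (H : ℝ → ℝ) (z : ℝ) : ℝ :=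
  ∫ u in (0 : ℝ)..z, ∫ t in (0 : ℝ)..u, H t

lemma doublePrimitive_zero : doublePrimitive H 0 = 0 := integral_same

lemma doublePrimitive_neg (hH : ∀ t, H (-t) = H t) (z : ℝ) :
    doublePrimitive H (-z) = doublePrimitive H z :=
  integral_zero_neg_of_odd (integral_zero_neg_of_even hH) z

lemma doublePrimitive_nonneg (hH : ∀ t, 0 ≤ H t) (z : ℝ) : 0 ≤ doublePrimitive H z := by
  rcases le_total 0 z with hz | hz
  · exact integral_nonneg hz fun u hu => integral_nonneg hu.1 fun t _ => hH t
  · have h : 0 ≤ ∫ u in z..0, -∫ t in (0 : ℝ)..u, H t := integral_nonneg hz fun u hu => by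
      rw [integral_symm, neg_neg]
      exact integral_nonneg hu.2 fun t _ => hH t
    rwa [intervalIntegral.integral_neg, ← integral_symm] at h

lemma hasDerivAt_doublePrimitive (hH : Continuous H) (z : ℝ) :
    HasDerivAt (doublePrimitive H) (∫ t in (0 : ℝ)..z, H t) z :=
  ((continuous_primitive (fun _ _ => hH.intervalIntegrable _ _) 0).integral_hasStrictDerivAt
    0 z).hasDerivAt

lemma deriv_doublePrimitive (hH : Continuous H) :
    deriv (doublePrimitive H) = fun z => ∫ t in (0 : ℝ)..z, H t :=
  deriv_eq (hasDerivAt_doublePrimitive hH)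

lemma deriv_deriv_doublePrimitive (hH : Continuous H) : deriv (deriv (doublePrimitive H)) = H := by
  rw [deriv_doublePrimitive hH]
  exact deriv_eq fun z => (hH.integral_hasStrictDerivAt 0 z).hasDerivAt

lemma differentiable_doublePrimitive (hH : Continuous H) : Differentiable ℝ (doublePrimitive H) :=
  fun z => (hasDerivAt_doublePrimitive hH z).differentiableAt

lemma differentiable_deriv_doublePrimitive (hH : Continuous H) :
    Differentiable ℝ (deriv (doublePrimitive H)) := by
  rw [deriv_doublePrimitive hH]
  exact fun z => (hH.integral_hasStrictDerivAt 0 z).hasDerivAt.differentiableAt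

lemma contDiff_two_doublePrimitive (hH : Continuous H) : ContDiff ℝ 2 (doublePrimitive H) := by
  rw [show (2 : WithTop ℕ∞) = 1 + 1 from rfl, contDiff_succ_iff_deriv, contDiff_one_iff_deriv,
    deriv_deriv_doublePrimitive hH]
  exact ⟨differentiable_doublePrimitive hH, by simp,
    differentiable_deriv_doublePrimitive hH, hH⟩

lemma convexOn_doublePrimitive (hH : Continuous H) (hH0 : ∀ t, 0 ≤ H t) :
    ConvexOn ℝ univ (doublePrimitive H) :=
  convexOn_univ_of_deriv2_nonneg (differentiable_doublePrimitive hH)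
    (differentiable_deriv_doublePrimitive hH) fun x => by
      simpa only [Function.iterate_succ, Function.iterate_zero, Function.comp_apply, id,
        deriv_deriv_doublePrimitive hH] using hH0 x

lemma doublePrimitive_eq_of_eqOn {z : ℝ} (hf : ContDiff ℝ 2 f) (hf0 : f 0 = 0)
    (hf'0 : deriv f 0 = 0) (hHf : EqOn H (deriv (deriv f)) (uIcc 0 z)) :
    doublePrimitive H z = f z := by
  have hf' : Differentiable ℝ f := hf.differentiable (by norm_num)
  have hf'' : Differentiable ℝ (deriv f) := hf.differentiable_deriv_two
  have hf''' : Continuous (deriv (deriv f)) := (hf.iterate_deriv' 0 2).continuous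
  have hprim : EqOn (fun u => ∫ t in (0 : ℝ)..u, H t) (deriv f) (uIcc 0 z) := fun u hu => by
    dsimp only
    rw [integral_congr (hHf.mono (uIcc_subset_uIcc_left hu)),
      integral_deriv_eq_sub (fun x _ => hf'' x) (hf'''.intervalIntegrable _ _), hf'0, sub_zero]
  rw [doublePrimitive, integral_congr hprim,
    integral_deriv_eq_sub (fun x _ => hf' x)
      ((hf.continuous_deriv (by norm_num)).intervalIntegrable _ _), hf0, sub_zero]

end Primitive

/- A continuous substitute for the paper's smooth cutoff interpolation `G_M`: continuity is all
that the `C²` regularity of `V_M` needs. -/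
noncomputable def tailExtension (g : ℝ → ℝ) (M α t : ℝ) : ℝ :=
  if |t| ≤ M then g |t| else g M + (|t| - M) ^ α

section TailExtension

variable {g : ℝ → ℝ} {M α : ℝ}

lemma tailExtension_neg (t : ℝ) : tailExtension g M α (-t) = tailExtension g M α t := by
  simp only [tailExtension, abs_neg]

lemma tailExtension_of_mem_Icc {t : ℝ} (ht : t ∈ Icc 0 M) : tailExtension g M α t = g t := by
  rw [tailExtension, abs_of_nonneg ht.1, if_pos ht.2]

lemma tailExtension_of_le (hM : 0 ≤ M) (hα : 0 < α) {t : ℝ} (ht : M ≤ t) :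
    tailExtension g M α t = g M + (t - M) ^ α := by
  rw [tailExtension, abs_of_nonneg (hM.trans ht)]
  split_ifs with h
  · rw [le_antisymm h ht, sub_self, zero_rpow hα.ne', add_zero]
  · rfl

lemma continuous_tailExtension (hg : Continuous g) (hα : 0 < α) :
    Continuous (tailExtension g M α) :=
  Continuous.if_le (hg.comp continuous_abs)
    (continuous_const.add
      ((continuous_rpow_const hα.le).comp (continuous_abs.sub continuous_const)))
    continuous_abs continuous_const fun t ht => by
      simp only [ht, sub_self, zero_rpow hα.ne', add_zero]

lemma tailExtension_nonneg (hg : ∀ t, 0 ≤ g t) (t : ℝ) : 0 ≤ tailExtension g M α t := by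
  unfold tailExtension
  split_ifs with h
  · exact hg _
  · exact add_nonneg (hg M) (rpow_nonneg (by linarith [not_le.mp h]) α)

lemma integral_tailExtension_of_le (hg : Continuous g) (hM : 0 ≤ M) (hα : 0 < α) {z : ℝ}
    (hz : M ≤ z) :
    ∫ t in (0 : ℝ)..z, tailExtension g M α t =
      (∫ t in (0 : ℝ)..M, tailExtension g M α t) + g M * (z - M) +
        (z - M) ^ (α + 1) / (α + 1) := by
  have hc := continuous_tailExtension (M := M) hg hα
  have hrpow : Continuous fun t : ℝ => (t - M) ^ α :=
    (continuous_rpow_const hα.le).comp (continuous_id.sub continuous_const)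
  have htail : EqOn (tailExtension g M α) (fun t => g M + (t - M) ^ α) (uIcc M z) :=
    fun t ht => tailExtension_of_le hM hα (by rw [uIcc_of_le hz] at ht; exact ht.1)
  rw [← integral_add_adjacent_intervals (hc.intervalIntegrable 0 M) (hc.intervalIntegrable M z),
    integral_congr htail, integral_add intervalIntegrable_const (hrpow.intervalIntegrable _ _),
    integral_comp_sub_right (fun u => u ^ α), integral_const, sub_self,
    integral_rpow (Or.inl (by linarith)), zero_rpow (by linarith), smul_eq_mul]
  ring

end TailExtension

lemma rpow_le_exp_sq {x p : ℝ} (hx : 1 ≤ x) (hp : p ≤ x) : x ^ p ≤ exp (x ^ 2) := by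
  have hlog : 0 ≤ log x := log_nonneg hx
  have hlogx : log x ≤ x := (log_le_sub_one_of_pos (by linarith)).trans (by linarith)
  rw [rpow_def_of_pos (by linarith), exp_le_exp]
  nlinarith

section Growth

variable {g : ℝ → ℝ} {M α z : ℝ}

lemma deriv_doublePrimitive_tailExtension_of_le (hg : Continuous g) (hM : 0 ≤ M) (hα : 0 < α)
    (hz : M ≤ z) :
    deriv (doublePrimitive (tailExtension g M α)) z =
      (∫ t in (0 : ℝ)..M, tailExtension g M α t) + g M * (z - M) +
        (z - M) ^ (α + 1) / (α + 1) := by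
  rw [(hasDerivAt_doublePrimitive (continuous_tailExtension hg hα) z).deriv,
    integral_tailExtension_of_le hg hM hα hz]

lemma mul_rpow_le_deriv_doublePrimitive_tailExtension (hg : Continuous g) (hg0 : ∀ t, 0 ≤ g t)
    (hM : 0 ≤ M) (hα : 0 < α) (hz : 2 * M ≤ z) :
    ((α + 1) * 2 ^ (α + 1))⁻¹ * z ^ (1 + α) ≤
      deriv (doublePrimitive (tailExtension g M α)) z := by
  have hK : 0 ≤ ∫ t in (0 : ℝ)..M, tailExtension g M α t :=
    integral_nonneg hM fun t _ => tailExtension_nonneg hg0 t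
  have hD : 0 ≤ g M * (z - M) := mul_nonneg (hg0 M) (by linarith)
  have hhalf : (z / 2) ^ (α + 1) ≤ (z - M) ^ (α + 1) :=
    rpow_le_rpow (by linarith) (by linarith) (by linarith)
  have hlhs : ((α + 1) * 2 ^ (α + 1))⁻¹ * z ^ (1 + α) = (z / 2) ^ (α + 1) / (α + 1) := by
    rw [div_rpow (by linarith) zero_le_two, add_comm 1 α]
    field_simp
  rw [deriv_doublePrimitive_tailExtension_of_le hg hM hα (by linarith), hlhs]
  have := div_le_div_of_nonneg_right hhalf (by linarith : (0 : ℝ) ≤ α + 1)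
  linarith

lemma abs_deriv_doublePrimitive_tailExtension_le (hg : Continuous g) (hg0 : ∀ t, 0 ≤ g t)
    (hM : 0 ≤ M) (hα : 0 < α) (hz : 2 * M + α + 1 ≤ z) :
    |deriv (doublePrimitive (tailExtension g M α)) z| ≤
      ((∫ t in (0 : ℝ)..M, tailExtension g M α t) + g M + (α + 1)⁻¹) * exp (z ^ 2) := by
  set K := ∫ t in (0 : ℝ)..M, tailExtension g M α t
  have hK : 0 ≤ K := integral_nonneg hM fun t _ => tailExtension_nonneg hg0 t
  have hE : 1 ≤ exp (z ^ 2) := one_le_exp (sq_nonneg z)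
  have hzE : z - M ≤ exp (z ^ 2) := by nlinarith [add_one_le_exp (z ^ 2)]
  have hpowE : (z - M) ^ (α + 1) ≤ exp (z ^ 2) :=
    (rpow_le_rpow (by linarith) (by linarith) (by linarith)).trans
      (rpow_le_exp_sq (by linarith) (by linarith))
  have hinv : 0 ≤ (α + 1)⁻¹ := by positivity
  rw [deriv_doublePrimitive_tailExtension_of_le hg hM hα (by linarith), div_eq_mul_inv,
    abs_of_nonneg (add_nonneg (add_nonneg hK (mul_nonneg (hg0 M) (by linarith)))
      (mul_nonneg (rpow_nonneg (by linarith) _) hinv))]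
  linarith [mul_le_mul_of_nonneg_left hE hK, mul_le_mul_of_nonneg_left hzE (hg0 M),
    mul_le_mul_of_nonneg_right hpowE hinv]

end Growth

lemma deriv_zero_of_even {f : ℝ → ℝ} (hf : ∀ x, f (-x) = f x) : deriv f 0 = 0 := by
  have h := deriv_comp_neg (f := f) (x := 0)
  simp only [hf, neg_zero] at h
  linarith

lemma doublePrimitive_tailExtension_eq {f : ℝ → ℝ} {M α z : ℝ} (hf : ContDiff ℝ 2 f)
    (heven : ∀ x, f (-x) = f x) (hf0 : f 0 = 0) (hz : |z| ≤ M) :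
    doublePrimitive (tailExtension (deriv (deriv f)) M α) z = f z := by
  wlog hz0 : 0 ≤ z generalizing z
  · rw [← doublePrimitive_neg tailExtension_neg, ← heven]
    exact this (by rwa [abs_neg]) (by linarith)
  rw [abs_of_nonneg hz0] at hz
  refine doublePrimitive_eq_of_eqOn hf hf0 (deriv_zero_of_even heven) fun t ht => ?_
  rw [uIcc_of_le hz0] at ht
  exact tailExtension_of_mem_Icc ⟨ht.1, ht.2.trans hz⟩

def HasLocalBehavior (f : ℝ → ℝ) (C₀ α : ℝ) : Prop :=
  ∀ δ > (0 : ℝ), ∃ l₀ > (0 : ℝ), ∀ l : ℝ, 0 < l → l < l₀ → ∀ z : ℝ, |z| ≤ 1 →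
    |deriv f (l * z) / l ^ (1 + α) - C₀ * |z| ^ (1 + α) * Real.sign z| < δ

lemma HasLocalBehavior.congr {f g : ℝ → ℝ} {C₀ α M : ℝ} (hf : HasLocalBehavior f C₀ α)
    (hM : 0 < M) (hfg : ∀ z, |z| ≤ M → g z = f z) : HasLocalBehavior g C₀ α := by
  intro δ hδ
  obtain ⟨l₀, hl₀, hl⟩ := hf δ hδ
  refine ⟨min l₀ M, lt_min hl₀ hM, fun l hl0 hlt z hz => ?_⟩
  have hlz : |l * z| < M := by
    rw [abs_mul, abs_of_pos hl0]
    nlinarith [min_le_right l₀ M, abs_nonneg z]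
  have hderiv : deriv g (l * z) = deriv f (l * z) := Filter.EventuallyEq.deriv_eq <|
    Filter.mem_of_superset ((isOpen_lt continuous_abs continuous_const).mem_nhds hlz)
      fun y hy => hfg y (le_of_lt hy)
  rw [hderiv]
  exact hl l hl0 (hlt.trans_le (min_le_left _ _)) z hz

lemma ConvexOn.deriv_deriv_nonneg {f : ℝ → ℝ} (hf : ConvexOn ℝ univ f) (hd : Differentiable ℝ f)
    (x : ℝ) : 0 ≤ deriv (deriv f) x :=
  (monotoneOn_univ.mp (hf.monotoneOn_deriv fun y _ => hd y)).deriv_nonneg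

theorem stmt_10_general
    (V : ℝ → ℝ) (C₀ α M : ℝ) (hα : 0 < α) (hM : 0 < M)
    (hV2 : ContDiff ℝ 2 V) (hconv : ConvexOn ℝ Set.univ V)
    (heven : ∀ z : ℝ, V (-z) = V z) (hV0 : V 0 = 0)
    (hloc : ∀ δ > (0:ℝ), ∃ l₀ > (0:ℝ), ∀ l : ℝ, 0 < l → l < l₀ →
      ∀ z : ℝ, |z| ≤ 1 →
        |deriv V (l * z) / l ^ (1 + α) - C₀ * |z| ^ (1 + α) * Real.sign z| < δ) :
    ∃ (VM : ℝ → ℝ) (c C R : ℝ), 0 < c ∧ 0 < C ∧ 0 < R ∧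
      ContDiff ℝ 2 VM ∧ ConvexOn ℝ Set.univ VM ∧
      (∀ z : ℝ, VM (-z) = VM z) ∧ (∀ z : ℝ, 0 ≤ VM z) ∧ VM 0 = 0 ∧
      (∀ z : ℝ, |z| ≤ M → VM z = V z) ∧
      (∀ z : ℝ, R ≤ z → c * z ^ (1 + α) ≤ deriv VM z) ∧
      (∀ z : ℝ, R ≤ z → |deriv VM z| ≤ C * Real.exp (z ^ 2)) ∧
      (∀ δ > (0:ℝ), ∃ l₀ > (0:ℝ), ∀ l : ℝ, 0 < l → l < l₀ →
        ∀ z : ℝ, |z| ≤ 1 →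
          |deriv VM (l * z) / l ^ (1 + α) - C₀ * |z| ^ (1 + α) * Real.sign z| < δ) := by
  have hV'' : Continuous (deriv (deriv V)) := (hV2.iterate_deriv' 0 2).continuous
  have hV''0 := hconv.deriv_deriv_nonneg (hV2.differentiable (by norm_num))
  set H := tailExtension (deriv (deriv V)) M α
  have hH : Continuous H := continuous_tailExtension hV'' hα
  have hH0 : ∀ t, 0 ≤ H t := tailExtension_nonneg hV''0
  have hK : 0 ≤ ∫ t in (0 : ℝ)..M, H t := integral_nonneg hM.le fun t _ => hH0 t
  have hVM : ∀ z, |z| ≤ M → doublePrimitive H z = V z := fun z hz =>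
    doublePrimitive_tailExtension_eq hV2 heven hV0 hz
  refine ⟨doublePrimitive H, ((α + 1) * 2 ^ (α + 1))⁻¹,
    (∫ t in (0 : ℝ)..M, H t) + deriv (deriv V) M + (α + 1)⁻¹, 2 * M + α + 1,
    by positivity, add_pos_of_nonneg_of_pos (add_nonneg hK (hV''0 M)) (by positivity),
    by positivity, contDiff_two_doublePrimitive hH, convexOn_doublePrimitive hH hH0,
    doublePrimitive_neg tailExtension_neg, doublePrimitive_nonneg hH0, doublePrimitive_zero, hVM,
    fun z hz =>
      mul_rpow_le_deriv_doublePrimitive_tailExtension hV'' hV''0 hM.le hα (by linarith),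
    fun z hz => abs_deriv_doublePrimitive_tailExtension_le hV'' hV''0 hM.le hα hz,
    HasLocalBehavior.congr hloc hM hVM⟩

/-- existence of a regular potential `V_M` agreeing with `V`
on `[−M, M]`, with polynomial lower and Gaussian upper growth of `V_M'`,
preserving regularity, convexity, evenness and the local behavior hypothesis. -/
theorem stmt_10
    (V : ℝ → ℝ) (C₀ α M : ℝ) (hC₀ : 0 < C₀) (hα : 0 < α) (hM : 0 < M)
    (hV2 : ContDiff ℝ 2 V) (hconv : ConvexOn ℝ Set.univ V)
    (heven : ∀ z : ℝ, V (-z) = V z) (hV0 : V 0 = 0) (hVnn : ∀ z : ℝ, 0 ≤ V z)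
    (hloc : ∀ δ > (0:ℝ), ∃ l₀ > (0:ℝ), ∀ l : ℝ, 0 < l → l < l₀ →
      ∀ z : ℝ, |z| ≤ 1 →
        |deriv V (l * z) / l ^ (1 + α) - C₀ * |z| ^ (1 + α) * Real.sign z| < δ) :
    ∃ (VM : ℝ → ℝ) (c C R : ℝ), 0 < c ∧ 0 < C ∧ 0 < R ∧
      ContDiff ℝ 2 VM ∧ ConvexOn ℝ Set.univ VM ∧
      (∀ z : ℝ, VM (-z) = VM z) ∧ (∀ z : ℝ, 0 ≤ VM z) ∧ VM 0 = 0 ∧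
      (∀ z : ℝ, |z| ≤ M → VM z = V z) ∧
      (∀ z : ℝ, R ≤ z → c * z ^ (1 + α) ≤ deriv VM z) ∧
      (∀ z : ℝ, R ≤ z → |deriv VM z| ≤ C * Real.exp (z ^ 2)) ∧
      (∀ δ > (0:ℝ), ∃ l₀ > (0:ℝ), ∀ l : ℝ, 0 < l → l < l₀ →
        ∀ z : ℝ, |z| ≤ 1 →
          |deriv VM (l * z) / l ^ (1 + α) - C₀ * |z| ^ (1 + α) * Real.sign z| < δ) :=
  stmt_10_general V C₀ α M hα hM hV2 hconv heven hV0 hloc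
end

section
/- Let (Y^ε_t(x)) be solutions of dY = F_ε(Y)dt + dB with y F_ε(y) ≤ 0 for all y, coupled so that Y^ε_t(x) is nondecreasing in x, and satisfying the uniform bound sup_{x∈ℝ} E[|Y^ε_t(x)|²] ≤ C_t < ∞ with t ↦ C_t locally bounded on (0, ∞). Then for fixed 0 < t₀ < T the family of processes (Y^ε(r))_{r ∈ ℝ} restricted to [t₀, T] is tight in C([t₀,T]; ℝ): (i) for each t ∈ [t₀,T], lim_{A→∞} sup_{r} P(|Y^ε_t(r)| > A) = 0; and (ii) for every η > 0, lim_{δ→0} sup_r P( sup_{|t−s|≤δ, s,t ∈ [t₀,T]} |Y^ε_t(r) − Y^ε_s(r)| > η ) = 0. -/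
open MeasureTheory ProbabilityTheory Filter

/-- A standard one-dimensional Brownian motion: starts at `0`, has continuous
paths, Gaussian increments, and independent increments. -/
def IsBrownianMotion {Ω : Type*} [MeasurableSpace Ω] (P : Measure Ω)
    (B : ℝ → Ω → ℝ) : Prop :=
  (∀ ω, B 0 ω = 0) ∧
  (∀ ω, Continuous fun t => B t ω) ∧
  (∀ t, Measurable (B t)) ∧
  (∀ s t : ℝ, 0 ≤ s → s ≤ t →
    P.map (fun ω => B t ω - B s ω) = gaussianReal 0 (t - s).toNNReal) ∧
  (∀ (n : ℕ) (τ : ℕ → ℝ), Monotone τ → (∀ i, 0 ≤ τ i) →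
    iIndepFun
      (fun i : Fin n => fun ω => B (τ (i + 1)) ω - B (τ i) ω) P)

open scoped ENNReal NNReal Topology

/-!
Pathwise comparison: after the last time before `u` at which `Y ≤ c` (for some `c ≥ 0`), the
drift pushes `Y` down, so only `B` can raise it; with the symmetric argument this gives
`|Y u| ≤ |Y a| + 2 sup_{[a, u]} |B - B a|`.

(i) The fourth moments of the dyadic increments of `B` scale like `(u - s)²`, so the
chaining sum `∑ₙ maxₖ |ΔₙₖB|` dominates `sup_{[0, t]} |B|` and lies in `L⁴`. Hence `|Y_t(r)|²`
is integrable, which is needed because the assumed bound on `∫ |Y_t(r)|²` says nothing about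
a non-integrable function (its Bochner integral is `0`). Chebyshev then gives (i).

(ii) Outside three events of small probability (`|Y_{t₀}(r)|` large, by (i); a large excursion
of `B` on `[t₀, T]`; an oscillation of `B` larger than `η / 2` within `δ`), the comparison keeps
`Y` in a compact set where `|F| ≤ C`, so `|Y u - Y s| ≤ C |u - s| + |B u - B s| < η`. The events
are measurable because continuity reduces their defining suprema to countable dense sets.
-/

section Comparison

/-- Integral form of `df = F(f) dt + dg` on `[a, b]`. -/
def IsSolutionOn (F g : ℝ → ℝ) (a b : ℝ) (f : ℝ → ℝ) : Prop :=
  ∀ s u, a ≤ s → s ≤ u → u ≤ b → f u - f s = (∫ v in s..u, F (f v)) + (g u - g s)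

variable {F f g : ℝ → ℝ} {a b : ℝ}

lemma isSolutionOn_of_eq_integral (hF : Continuous F) (hf : Continuous f) {x : ℝ}
    (h : ∀ t ≥ (0:ℝ), f t = x + (∫ u in (0:ℝ)..t, F (f u)) + g t) (ha : 0 ≤ a) (b : ℝ) :
    IsSolutionOn F g a b f := by
  intro s u hs hsu _
  have hint (c d : ℝ) : IntervalIntegrable (fun v => F (f v)) volume c d :=
    (hF.comp hf).intervalIntegrable c d
  rw [h u (ha.trans (hs.trans hsu)), h s (ha.trans hs),
    ← intervalIntegral.integral_add_adjacent_intervals (hint 0 s) (hint s u)]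
  ring

lemma IsSolutionOn.neg (h : IsSolutionOn F g a b f) :
    IsSolutionOn (fun y => -F (-y)) (-g) a b (-f) := by
  intro s u hs hsu hub
  simp only [Pi.neg_apply, neg_neg, intervalIntegral.integral_neg]
  linarith [h s u hs hsu hub]

lemma IsSolutionOn.le_add_two_mul (h : IsSolutionOn F g a b f) (hF : ∀ y, 0 < y → F y ≤ 0)
    (hf : Continuous f) {c m : ℝ} (hc : 0 ≤ c) (hfa : f a ≤ c)
    (hg : ∀ v ∈ Set.Icc a b, |g v - g a| ≤ m) {u : ℝ} (hu : u ∈ Set.Icc a b) :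
    f u ≤ c + 2 * m := by
  obtain ⟨τ, ⟨⟨haτ, hτu⟩, hfτ⟩, hτmax⟩ :=
    (isCompact_Icc.inter_right (isClosed_Iic.preimage hf)).exists_isGreatest
      (⟨a, ⟨le_rfl, hu.1⟩, hfa⟩ : (Set.Icc a u ∩ f ⁻¹' Set.Iic c).Nonempty)
  have hdrift : (∫ v in τ..u, F (f v)) ≤ 0 := by
    rw [intervalIntegral.integral_of_le hτu]
    refine integral_nonpos_of_ae ?_
    filter_upwards [self_mem_ae_restrict measurableSet_Ioc] with v hv
    refine hF _ (hc.trans_lt (lt_of_not_ge fun hfv => ?_))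
    exact hv.1.not_ge (hτmax ⟨⟨haτ.trans hv.1.le, hv.2⟩, hfv⟩)
  have hgu := abs_le.mp (hg u hu)
  have hgτ := abs_le.mp (hg τ ⟨haτ, hτu.trans hu.2⟩)
  have := h τ u haτ hτu hu.2
  simp only [Set.mem_preimage, Set.mem_Iic] at hfτ
  linarith

lemma IsSolutionOn.abs_le_add_two_mul (h : IsSolutionOn F g a b f) (hF : ∀ y, y * F y ≤ 0)
    (hf : Continuous f) {c m : ℝ} (hfa : |f a| ≤ c) (hg : ∀ v ∈ Set.Icc a b, |g v - g a| ≤ m)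
    {u : ℝ} (hu : u ∈ Set.Icc a b) : |f u| ≤ c + 2 * m := by
  have hc : 0 ≤ c := (abs_nonneg _).trans hfa
  have hupper := h.le_add_two_mul (fun y hy => nonpos_of_mul_nonpos_right (hF y) hy) hf hc
    ((le_abs_self _).trans hfa) hg hu
  have hlower := h.neg.le_add_two_mul (fun y hy => by nlinarith [hF (-y)]) hf.neg hc
    ((neg_le_abs _).trans hfa)
    (fun v hv => by simpa only [Pi.neg_apply, neg_sub_neg, abs_sub_comm] using hg v hv) hu
  simp only [Pi.neg_apply] at hlower
  exact abs_le.mpr ⟨by linarith, hupper⟩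

lemma IsSolutionOn.abs_sub_le (h : IsSolutionOn F g a b f) {C : ℝ}
    (hC : ∀ v ∈ Set.Icc a b, |F (f v)| ≤ C) {s u : ℝ} (hs : s ∈ Set.Icc a b)
    (hu : u ∈ Set.Icc a b) :
    |f u - f s| ≤ C * |u - s| + |g u - g s| := by
  wlog hsu : s ≤ u generalizing s u
  · rw [abs_sub_comm (f u), abs_sub_comm u, abs_sub_comm (g u)]
    exact this hu hs (le_of_not_ge hsu)
  rw [h s u hs.1 hsu hu.2]
  refine (abs_add_le _ _).trans (add_le_add_left ?_ _)
  rw [← Real.norm_eq_abs]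
  refine intervalIntegral.norm_integral_le_of_norm_le_const fun v hv => ?_
  rw [Set.uIoc_of_le hsu] at hv
  exact hC v ⟨hs.1.trans hv.1.le, hv.2.trans hu.2⟩

lemma IsSolutionOn.abs_sub_le_of_bounds (h : IsSolutionOn F g a b f) (hF : ∀ y, y * F y ≤ 0)
    (hf : Continuous f) {K₁ K₂ C : ℝ} (hC : ∀ y ∈ Set.Icc (-(K₁ + 2 * K₂)) (K₁ + 2 * K₂), |F y| ≤ C)
    (hfa : |f a| ≤ K₁) (hg : ∀ v ∈ Set.Icc a b, |g v - g a| ≤ K₂) {s u : ℝ}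
    (hs : s ∈ Set.Icc a b) (hu : u ∈ Set.Icc a b) :
    |f u - f s| ≤ C * |u - s| + |g u - g s| :=
  h.abs_sub_le (fun _ hv => hC _ (abs_le.1 (h.abs_le_add_two_mul hF hf hfa hg hv))) hs hu

end Comparison

section LpSum

variable {α : Type*} [MeasurableSpace α] {μ : Measure α} {p : ℝ≥0∞}

lemma eLpNorm_iSup_of_monotone {g : ℕ → α → ℝ≥0∞} (hg : ∀ N, AEMeasurable (g N) μ)
    (hmono : Monotone g) (hp0 : p ≠ 0) (hp_top : p ≠ ∞) :
    eLpNorm (fun a => ⨆ N, g N a) p μ = ⨆ N, eLpNorm (g N) p μ := by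
  have hr : 0 < p.toReal := ENNReal.toReal_pos hp0 hp_top
  have hrpow {r : ℝ} (hr : 0 < r) (c : ℕ → ℝ≥0∞) : (⨆ N, c N) ^ r = ⨆ N, c N ^ r :=
    Monotone.map_iSup_of_continuousAt ENNReal.continuous_rpow_const.continuousAt
      (ENNReal.monotone_rpow_of_nonneg hr.le) (by simp [hr])
  have hmono_pow : Monotone fun N a => g N a ^ p.toReal :=
    fun M N h a => ENNReal.rpow_le_rpow (hmono h a) hr.le
  simp_rw [eLpNorm_eq_lintegral_rpow_enorm_toReal hp0 hp_top, enorm_eq_self, hrpow hr]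
  rw [lintegral_iSup' (fun N => (hg N).pow_const _) (ae_of_all _ fun a M N h => hmono_pow h a),
    hrpow (one_div_pos.2 hr)]

lemma eLpNorm_tsum_le {f : ℕ → α → ℝ≥0∞} (hf : ∀ n, AEMeasurable (f n) μ) (hp : 1 ≤ p)
    (hp_top : p ≠ ∞) :
    eLpNorm (fun a => ∑' n, f n a) p μ ≤ ∑' n, eLpNorm (f n) p μ := by
  have hmono : Monotone fun N => ∑ n ∈ Finset.range N, f n :=
    fun M N h => Finset.sum_le_sum_of_subset (Finset.range_mono h)
  calc eLpNorm (fun a => ∑' n, f n a) p μ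
      = eLpNorm (fun a => ⨆ N, (∑ n ∈ Finset.range N, f n) a) p μ := by
        simp_rw [Finset.sum_apply, ENNReal.tsum_eq_iSup_nat]
    _ = ⨆ N, eLpNorm (∑ n ∈ Finset.range N, f n) p μ :=
        eLpNorm_iSup_of_monotone (fun N => Finset.aemeasurable_sum _ fun n _ => hf n) hmono
          (zero_lt_one.trans_le hp).ne' hp_top
    _ ≤ ⨆ N, ∑ n ∈ Finset.range N, eLpNorm (f n) p μ :=
        iSup_mono fun N => eLpNorm_sum_le (fun n _ => (hf n).aestronglyMeasurable) hp
    _ = ∑' n, eLpNorm (f n) p μ := ENNReal.tsum_eq_iSup_nat.symm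

end LpSum

section Chaining

variable {Ω : Type*} {X : ℝ → Ω → ℝ} {t : ℝ}

noncomputable def dyadicMaxIncrement (X : ℝ → Ω → ℝ) (t : ℝ) (n : ℕ) (ω : Ω) : ℝ≥0∞ :=
  ⨆ k : Fin (2 ^ n), edist (X (k * t / 2 ^ n) ω) (X ((k + 1) * t / 2 ^ n) ω)

lemma edist_le_dyadicMaxIncrement {n k : ℕ} (hk : k < 2 ^ n) (ω : Ω) :
    edist (X (k * t / 2 ^ n) ω) (X ((k + 1) * t / 2 ^ n) ω) ≤ dyadicMaxIncrement X t n ω :=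
  le_iSup (fun k : Fin (2 ^ n) => edist (X (k * t / 2 ^ n) ω) (X ((k + 1) * t / 2 ^ n) ω)) ⟨k, hk⟩

lemma measurable_dyadicMaxIncrement [MeasurableSpace Ω] (hX : ∀ u, Measurable (X u)) (n : ℕ) :
    Measurable (dyadicMaxIncrement X t n) :=
  .iSup fun _ => (hX _).edist (hX _)

lemma edist_le_sum_dyadicMaxIncrement (ω : Ω) (N : ℕ) {k : ℕ} (hk : k ≤ 2 ^ N) :
    edist (X 0 ω) (X (k * t / 2 ^ N) ω) ≤
      ∑ n ∈ Finset.range (N + 1), dyadicMaxIncrement X t n ω := by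
  induction N generalizing k with
  | zero =>
    interval_cases k
    · simp
    · simpa using edist_le_dyadicMaxIncrement (X := X) (t := t) (n := 0) (k := 0) one_pos ω
  | succ N ih =>
    have hhalf (j : ℕ) : ((2 * j : ℕ) : ℝ) * t / 2 ^ (N + 1) = j * t / 2 ^ N := by
      push_cast; field_simp; ring
    have h2N : 2 ^ (N + 1) = 2 * 2 ^ N := pow_succ' 2 N
    rw [Finset.sum_range_succ]
    -- `2j` is the level-`N` point `j`, and `2j + 1` lies one level-`(N + 1)` increment beyond it
    obtain ⟨j, rfl | rfl⟩ := Nat.even_or_odd' k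
    · rw [hhalf]
      exact (ih (by omega)).trans le_self_add
    · calc edist (X 0 ω) (X ((2 * j + 1 : ℕ) * t / 2 ^ (N + 1)) ω)
          ≤ edist (X 0 ω) (X ((2 * j : ℕ) * t / 2 ^ (N + 1)) ω)
            + edist (X ((2 * j : ℕ) * t / 2 ^ (N + 1)) ω)
                (X (((2 * j : ℕ) + 1) * t / 2 ^ (N + 1)) ω) := by
            push_cast; exact edist_triangle _ _ _
        _ ≤ _ := by
          gcongr
          · rw [hhalf]; exact ih (by omega)
          · exact edist_le_dyadicMaxIncrement (n := N + 1) (k := 2 * j) (by omega) ω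

lemma tendsto_floor_mul_div_two_pow (ht : 0 < t) {u : ℝ} (hu : 0 ≤ u) :
    Tendsto (fun N : ℕ => (⌊2 ^ N * (u / t)⌋₊ : ℝ) * t / 2 ^ N) atTop (𝓝 u) := by
  have hgrid (N : ℕ) : (⌊2 ^ N * (u / t)⌋₊ : ℝ) * t / 2 ^ N ∈ Set.Ioc (u - t / 2 ^ N) u := by
    have hfloor := Nat.floor_le (by positivity : 0 ≤ 2 ^ N * (u / t))
    have hfloor' := Nat.lt_floor_add_one (2 ^ N * (u / t))
    constructor
    · rw [sub_lt_iff_lt_add, ← add_div, lt_div_iff₀ (by positivity), ← add_one_mul]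
      calc u * 2 ^ N = 2 ^ N * (u / t) * t := by field_simp
        _ < _ := by gcongr
    · rw [div_le_iff₀ (by positivity)]
      calc (⌊2 ^ N * (u / t)⌋₊ : ℝ) * t ≤ 2 ^ N * (u / t) * t := by gcongr
        _ = u * 2 ^ N := by field_simp
  refine tendsto_of_tendsto_of_tendsto_of_le_of_le ?_ tendsto_const_nhds
    (fun N => (hgrid N).1.le) (fun N => (hgrid N).2)
  simpa using (tendsto_const_nhds (x := u)).sub
    ((tendsto_const_nhds (x := t)).div_atTop (tendsto_pow_atTop_atTop_of_one_lt one_lt_two))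

lemma edist_le_tsum_dyadicMaxIncrement (ht : 0 < t) {ω : Ω} (hX : Continuous fun u => X u ω)
    {u : ℝ} (hu : u ∈ Set.Icc 0 t) :
    edist (X 0 ω) (X u ω) ≤ ∑' n, dyadicMaxIncrement X t n ω := by
  refine le_of_tendsto' (((continuous_const.edist hX).tendsto u).comp
    (tendsto_floor_mul_div_two_pow ht hu.1)) fun N => ?_
  have hk : ⌊2 ^ N * (u / t)⌋₊ ≤ 2 ^ N := Nat.floor_le_of_le <| by
    push_cast
    exact mul_le_of_le_one_right (by positivity) ((div_le_one ht).2 hu.2)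
  exact (edist_le_sum_dyadicMaxIncrement ω N hk).trans (ENNReal.sum_le_tsum _)

lemma edist_dyadic_neighbours (ht : 0 ≤ t) (n k : ℕ) :
    edist ((k : ℝ) * t / 2 ^ n) ((k + 1) * t / 2 ^ n) = ENNReal.ofReal t / 2 ^ n := by
  rw [edist_dist, Real.dist_eq,
    show (k : ℝ) * t / 2 ^ n - (k + 1) * t / 2 ^ n = -(t / 2 ^ n) by ring,
    abs_neg, abs_of_nonneg (by positivity), ENNReal.ofReal_div_of_pos (by positivity)]
  simp

variable [MeasurableSpace Ω] {P : Measure Ω} {M : ℝ≥0∞}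

lemma lintegral_dyadicMaxIncrement_pow_four_le (hX : ∀ u, Measurable (X u))
    (hmom : ∀ s u, 0 ≤ s → s ≤ u → ∫⁻ ω, edist (X s ω) (X u ω) ^ 4 ∂P ≤ M * edist s u ^ 2)
    (ht : 0 ≤ t) (n : ℕ) :
    ∫⁻ ω, dyadicMaxIncrement X t n ω ^ 4 ∂P ≤ M * ENNReal.ofReal t ^ 2 * 2⁻¹ ^ n := by
  calc ∫⁻ ω, dyadicMaxIncrement X t n ω ^ 4 ∂P
      ≤ ∫⁻ ω, ∑ k : Fin (2 ^ n),
          edist (X (k * t / 2 ^ n) ω) (X ((k + 1) * t / 2 ^ n) ω) ^ 4 ∂P := by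
        refine lintegral_mono fun ω => ?_
        rw [dyadicMaxIncrement, ENNReal.iSup_pow_of_ne_zero four_ne_zero]
        exact iSup_le fun k => Finset.single_le_sum_of_canonicallyOrdered
          (f := fun k : Fin (2 ^ n) => edist (X (k * t / 2 ^ n) ω) (X ((k + 1) * t / 2 ^ n) ω) ^ 4)
          (Finset.mem_univ k)
    _ = ∑ k : Fin (2 ^ n),
          ∫⁻ ω, edist (X (k * t / 2 ^ n) ω) (X ((k + 1) * t / 2 ^ n) ω) ^ 4 ∂P :=
        lintegral_finsetSum _ fun k _ => ((hX _).edist (hX _)).pow_const 4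
    _ ≤ ∑ _k : Fin (2 ^ n), M * (ENNReal.ofReal t / 2 ^ n) ^ 2 := by
        refine Finset.sum_le_sum fun k _ => ?_
        rw [← edist_dyadic_neighbours ht]
        exact hmom _ _ (by positivity) (by gcongr; linarith)
    _ = M * ENNReal.ofReal t ^ 2 * 2⁻¹ ^ n := by
        have h : (2 : ℝ≥0∞) ^ n * (2 ^ n)⁻¹ = 1 := ENNReal.mul_inv_cancel
          (pow_ne_zero _ two_ne_zero) (ENNReal.pow_ne_top ENNReal.ofNat_ne_top)
        rw [Finset.sum_const, Finset.card_univ, Fintype.card_fin, nsmul_eq_mul, div_eq_mul_inv,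
          ← ENNReal.inv_pow]
        push_cast
        generalize (2 : ℝ≥0∞) ^ n = q at h ⊢
        calc _ = M * ENNReal.ofReal t ^ 2 * q⁻¹ * (q * q⁻¹) := by ring
          _ = _ := by rw [h, mul_one]

lemma eLpNorm_four_eq_lintegral_pow (f : Ω → ℝ≥0∞) :
    eLpNorm f 4 P = (∫⁻ ω, f ω ^ 4 ∂P) ^ (4⁻¹ : ℝ) := by
  rw [eLpNorm_eq_lintegral_rpow_enorm_toReal (by norm_num) (by norm_num)]
  simp

theorem memLp_four_tsum_dyadicMaxIncrement (hX : ∀ u, Measurable (X u)) (hM : M ≠ ∞)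
    (hmom : ∀ s u, 0 ≤ s → s ≤ u → ∫⁻ ω, edist (X s ω) (X u ω) ^ 4 ∂P ≤ M * edist s u ^ 2)
    (ht : 0 ≤ t) :
    MemLp (fun ω => ∑' n, dyadicMaxIncrement X t n ω) 4 P := by
  have hmeas (n : ℕ) := measurable_dyadicMaxIncrement (t := t) hX n
  refine ⟨(Measurable.tsum hmeas).aestronglyMeasurable, ?_⟩
  set c : ℝ≥0∞ := (M * ENNReal.ofReal t ^ 2) ^ (4⁻¹ : ℝ)
  set q : ℝ≥0∞ := 2⁻¹ ^ (4⁻¹ : ℝ)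
  calc eLpNorm (fun ω => ∑' n, dyadicMaxIncrement X t n ω) 4 P
      ≤ ∑' n, eLpNorm (dyadicMaxIncrement X t n) 4 P :=
        eLpNorm_tsum_le (fun n => (hmeas n).aemeasurable) (by norm_num) (by norm_num)
    _ ≤ ∑' n, c * q ^ n := by
        refine ENNReal.tsum_le_tsum fun n => ?_
        rw [eLpNorm_four_eq_lintegral_pow]
        calc _ ≤ (M * ENNReal.ofReal t ^ 2 * 2⁻¹ ^ n) ^ (4⁻¹ : ℝ) :=
              ENNReal.rpow_le_rpow (lintegral_dyadicMaxIncrement_pow_four_le hX hmom ht n)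
                (by norm_num)
          _ = c * q ^ n := by
              rw [ENNReal.mul_rpow_of_nonneg _ _ (by norm_num), ← ENNReal.rpow_natCast _ n,
                ← ENNReal.rpow_mul, mul_comm (n : ℝ), ENNReal.rpow_mul, ENNReal.rpow_natCast]
    _ = c * (1 - q)⁻¹ := by rw [ENNReal.tsum_mul_left, ENNReal.tsum_geometric]
    _ < ∞ := ENNReal.mul_lt_top
        (ENNReal.rpow_lt_top_of_nonneg (by norm_num) (ENNReal.mul_ne_top hM (by finiteness)))
        (ENNReal.inv_lt_top.2 (tsub_pos_of_lt (ENNReal.rpow_lt_one (by norm_num) (by norm_num))))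

end Chaining

section Gaussian

lemma lintegral_enorm_pow_four_gaussianReal (v : ℝ≥0) :
    ∫⁻ x, ‖x‖ₑ ^ 4 ∂gaussianReal 0 v = v ^ 2 * ∫⁻ x, ‖x‖ₑ ^ 4 ∂gaussianReal 0 1 := by
  have hmap : (gaussianReal 0 1).map ((NNReal.sqrt v : ℝ) * ·) = gaussianReal 0 v := by
    rw [gaussianReal_map_const_mul]
    congr 1
    · simp
    · ext; simp
  rw [← hmap, lintegral_map (by fun_prop) (by fun_prop), ← lintegral_const_mul _ (by fun_prop)]
  congr 1 with x
  rw [enorm_mul, mul_pow, Real.enorm_eq_ofReal (NNReal.coe_nonneg _), ENNReal.ofReal_coe_nnreal,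
    ← ENNReal.coe_pow, show 4 = 2 * 2 from rfl, pow_mul, NNReal.sq_sqrt, ENNReal.coe_pow]

lemma lintegral_enorm_pow_four_gaussianReal_lt_top :
    ∫⁻ x, ‖x‖ₑ ^ 4 ∂gaussianReal 0 1 < ∞ := by
  simpa using lintegral_rpow_enorm_lt_top_of_eLpNorm_lt_top (by norm_num) (by norm_num)
    (memLp_id_gaussianReal (μ := 0) (v := 1) 4).eLpNorm_lt_top

variable {Ω : Type*} [MeasurableSpace Ω] {P : Measure Ω} {B : ℝ → Ω → ℝ}

lemma IsBrownianMotion.lintegral_edist_pow_four_eq (hB : IsBrownianMotion P B) {s u : ℝ}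
    (hs : 0 ≤ s) (hsu : s ≤ u) :
    ∫⁻ ω, edist (B s ω) (B u ω) ^ 4 ∂P =
      (∫⁻ x, ‖x‖ₑ ^ 4 ∂gaussianReal 0 1) * edist s u ^ 2 := by
  obtain ⟨-, -, hmeas, hlaw, -⟩ := hB
  simp_rw [edist_comm (B s _), edist_eq_enorm_sub]
  rw [← lintegral_map (f := fun x : ℝ => ‖x‖ₑ ^ 4) (g := fun ω => B u ω - B s ω) (by fun_prop)
    ((hmeas u).sub (hmeas s)), hlaw s u hs hsu, lintegral_enorm_pow_four_gaussianReal, mul_comm,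
    Real.enorm_eq_ofReal_abs, abs_sub_comm, abs_of_nonneg (sub_nonneg.2 hsu)]
  rfl

end Gaussian

section Events

variable {Ω : Type*} [MeasurableSpace Ω]

lemma measurableSet_exists_lt {E : Type*} [TopologicalSpace E]
    [TopologicalSpace.PseudoMetrizableSpace E] [TopologicalSpace.SeparableSpace E]
    {h : E → Ω → ℝ} (hcont : ∀ ω, Continuous fun x => h x ω) (hmeas : ∀ x, Measurable (h x))
    (K : Set E) (c : ℝ) :
    MeasurableSet {ω | ∃ x ∈ K, c < h x ω} := by
  obtain ⟨D, hDK, hD, hKD⟩ :=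
    (TopologicalSpace.IsSeparable.of_separableSpace K).exists_countable_dense_subset
  have : {ω | ∃ x ∈ K, c < h x ω} = ⋃ x ∈ D, {ω | c < h x ω} := by
    ext ω
    simp only [Set.mem_ofPred_eq, Set.mem_iUnion, exists_prop]
    refine ⟨fun ⟨x, hxK, hx⟩ => ?_, fun ⟨x, hxD, hx⟩ => ⟨x, hDK hxD, hx⟩⟩
    obtain ⟨y, hy, hyD⟩ :=
      mem_closure_iff.1 (hKD hxK) _ (isOpen_lt continuous_const (hcont ω)) hx
    exact ⟨y, hyD, hy⟩
  rw [this]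
  exact .biUnion hD fun x _ => measurableSet_lt measurable_const (hmeas x)

variable {P : Measure Ω} [IsFiniteMeasure P]

lemma exists_measureReal_lt_of_antitone {s : ℕ → Set Ω} (hs : ∀ n, MeasurableSet (s n))
    (hanti : Antitone s) (hempty : ⋂ n, s n = ∅) {ε : ℝ} (hε : 0 < ε) :
    ∃ n, P.real (s n) < ε := by
  have := tendsto_measure_iInter_atTop (μ := P) (fun n => (hs n).nullMeasurableSet) hanti
    ⟨0, measure_ne_top P _⟩
  rw [hempty, measure_empty] at this
  obtain ⟨n, hn⟩ := (this.eventually_lt_const (ENNReal.ofReal_pos.2 hε)).exists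
  exact ⟨n, ENNReal.toReal_lt_of_lt_ofReal hn⟩

variable {X : ℝ → Ω → ℝ} (hcont : ∀ ω, Continuous fun u => X u ω) (hmeas : ∀ u, Measurable (X u))
include hcont hmeas

lemma exists_measureReal_excursion_lt (a b : ℝ) {ε : ℝ} (hε : 0 < ε) :
    ∃ K : ℝ, P.real {ω | ∃ u ∈ Set.Icc a b, K < |X u ω - X a ω|} < ε := by
  set E : ℕ → Set Ω := fun n => {ω | ∃ u ∈ Set.Icc a b, (n : ℝ) < |X u ω - X a ω|}
  have hE (n : ℕ) : MeasurableSet (E n) :=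
    measurableSet_exists_lt (fun ω => ((hcont ω).sub continuous_const).abs)
      (fun u => ((hmeas u).sub (hmeas a)).abs) _ _
  have hanti : Antitone E := fun m n hmn ω ⟨u, hu, hlt⟩ =>
    ⟨u, hu, lt_of_le_of_lt (by exact_mod_cast hmn) hlt⟩
  have hempty : ⋂ n, E n = ∅ := by
    refine Set.eq_empty_of_forall_notMem fun ω hω => ?_
    obtain ⟨C, hC⟩ := isCompact_Icc.exists_bound_of_continuousOn
      (((hcont ω).sub continuous_const).continuousOn (s := Set.Icc a b))
    obtain ⟨n, hn⟩ := exists_nat_gt C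
    obtain ⟨u, hu, hlt⟩ := Set.mem_iInter.1 hω n
    exact (hlt.trans_le ((hC u hu).trans hn.le)).false
  obtain ⟨n, hn⟩ := exists_measureReal_lt_of_antitone (P := P) hE hanti hempty hε
  exact ⟨n, hn⟩

lemma exists_measureReal_oscillation_lt (a b : ℝ) {η : ℝ} (hη : 0 < η) {ε : ℝ} (hε : 0 < ε) :
    ∃ δ > 0, P.real {ω | ∃ s ∈ Set.Icc a b, ∃ u ∈ Set.Icc a b,
      |u - s| ≤ δ ∧ η < |X u ω - X s ω|} < ε := by
  set K : ℕ → Set (ℝ × ℝ) := fun n =>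
    {p | p.1 ∈ Set.Icc a b ∧ p.2 ∈ Set.Icc a b ∧ |p.2 - p.1| ≤ 1 / (n + 1)}
  set E : ℕ → Set Ω := fun n => {ω | ∃ p ∈ K n, η < |X p.2 ω - X p.1 ω|}
  have hE (n : ℕ) : MeasurableSet (E n) :=
    measurableSet_exists_lt
      (fun ω => (((hcont ω).comp continuous_snd).sub ((hcont ω).comp continuous_fst)).abs)
      (fun p : ℝ × ℝ => ((hmeas p.2).sub (hmeas p.1)).abs) _ _
  have hanti : Antitone E := fun m n hmn ω ⟨p, ⟨hp1, hp2, hp⟩, hlt⟩ =>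
    ⟨p, ⟨hp1, hp2, hp.trans (one_div_le_one_div_of_le (by positivity)
      (by exact_mod_cast Nat.add_le_add_right hmn 1))⟩, hlt⟩
  have hempty : ⋂ n, E n = ∅ := by
    refine Set.eq_empty_of_forall_notMem fun ω hω => ?_
    obtain ⟨δ, hδ, hunif⟩ := Metric.uniformContinuousOn_iff.1
      (isCompact_Icc.uniformContinuousOn_of_continuous (hcont ω).continuousOn) η hη
    obtain ⟨n, hn⟩ := exists_nat_one_div_lt hδ
    obtain ⟨p, ⟨hp1, hp2, hp⟩, hlt⟩ := Set.mem_iInter.1 hω n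
    have := hunif p.2 hp2 p.1 hp1 (by rw [Real.dist_eq]; exact hp.trans_lt hn)
    rw [Real.dist_eq] at this
    exact hlt.not_gt this
  obtain ⟨n, hn⟩ := exists_measureReal_lt_of_antitone (P := P) hE hanti hempty hε
  refine ⟨1 / (n + 1), by positivity, lt_of_le_of_lt (measureReal_mono ?_) hn⟩
  rintro ω ⟨s, hs, u, hu, hsu, hlt⟩
  exact ⟨(s, u), ⟨hs, hu, hsu⟩, hlt⟩

end Events

section Markov

variable {Ω : Type*} [MeasurableSpace Ω] {P : Measure Ω} [IsFiniteMeasure P]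

lemma exists_measureReal_tail_lt_of_integral_sq_le {ι : Type*} {Z : ι → Ω → ℝ}
    (hint : ∀ i, Integrable (fun ω => |Z i ω| ^ 2) P) {C : ℝ}
    (hC : ∀ i, ∫ ω, |Z i ω| ^ 2 ∂P ≤ C) {ε : ℝ} (hε : 0 < ε) :
    ∃ A₀, ∀ A ≥ A₀, ∀ i, P.real {ω | A < |Z i ω|} < ε := by
  refine ⟨max C 0 / ε + 1, fun A hA i => ?_⟩
  have hA1 : 1 ≤ A := le_trans (le_add_of_nonneg_left (by positivity)) hA
  have hmarkov := mul_meas_ge_le_integral_of_nonneg (ae_of_all _ fun ω => by positivity) (hint i)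
    (A ^ 2)
  have hsub : P.real {ω | A < |Z i ω|} ≤ P.real {ω | A ^ 2 ≤ |Z i ω| ^ 2} :=
    measureReal_mono fun ω (hω : A < |Z i ω|) => pow_le_pow_left₀ (by linarith) hω.le 2
  by_contra! hge
  have hCA : max C 0 < ε * A := by
    rw [← div_lt_iff₀' hε]; linarith
  have hεA : ε * A ≤ ε * A ^ 2 := by
    gcongr; exact le_self_pow₀ hA1 two_ne_zero
  have : ε * A ^ 2 ≤ C := calc
    ε * A ^ 2 ≤ A ^ 2 * P.real {ω | A ^ 2 ≤ |Z i ω| ^ 2} := by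
      rw [mul_comm]; gcongr; exact hge.trans hsub
    _ ≤ ∫ ω, |Z i ω| ^ 2 ∂P := hmarkov
    _ ≤ C := hC i
  linarith [le_max_left C 0]

end Markov

section SDE

variable {Ω : Type*} [MeasurableSpace Ω] {P : Measure Ω} {B : ℝ → Ω → ℝ} {F : ℝ → ℝ}

lemma integrable_sq_of_inward_drift [IsProbabilityMeasure P] (hB : IsBrownianMotion P B)
    (hF : Continuous F) (hFneg : ∀ y, y * F y ≤ 0) {Z : ℝ → Ω → ℝ}
    (hZcont : ∀ ω, Continuous fun t => Z t ω) (hZmeas : ∀ t, Measurable (Z t)) {x : ℝ}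
    (hZ : ∀ ω, ∀ t ≥ (0:ℝ), Z t ω = x + (∫ u in (0:ℝ)..t, F (Z u ω)) + B t ω)
    {t : ℝ} (ht : 0 < t) :
    Integrable (fun ω => |Z t ω| ^ 2) P := by
  obtain ⟨hB0, hBc, hBm, -, -⟩ := id hB
  set W : Ω → ℝ≥0∞ := fun ω => ∑' n, dyadicMaxIncrement B t n ω
  have hW : MemLp W 4 P := memLp_four_tsum_dyadicMaxIncrement hBm
    lintegral_enorm_pow_four_gaussianReal_lt_top.ne
    (fun s u hs hsu => (hB.lintegral_edist_pow_four_eq hs hsu).le) ht.le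
  have hbound (ω : Ω) : ‖Z t ω‖ₑ ≤ ‖x‖ₑ + W ω + W ω := by
    obtain ⟨u₀, hu₀, hmax⟩ := isCompact_Icc.exists_isMaxOn (Set.nonempty_Icc.2 ht.le)
      (((hBc ω).sub continuous_const).abs.continuousOn (s := Set.Icc 0 t))
    have hZt : |Z t ω| ≤ |x| + 2 * |B u₀ ω - B 0 ω| :=
      (isSolutionOn_of_eq_integral hF (hZcont ω) (hZ ω) le_rfl t).abs_le_add_two_mul hFneg
        (hZcont ω) (by simp [hZ ω 0 le_rfl, hB0]) (fun v hv => hmax hv) ⟨ht.le, le_rfl⟩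
    have hBW : ENNReal.ofReal |B u₀ ω - B 0 ω| ≤ W ω := by
      rw [← Real.dist_eq, dist_comm, ← edist_dist]
      exact edist_le_tsum_dyadicMaxIncrement ht (hBc ω) hu₀
    calc ‖Z t ω‖ₑ = ENNReal.ofReal |Z t ω| := Real.enorm_eq_ofReal_abs _
      _ ≤ ENNReal.ofReal (|x| + |B u₀ ω - B 0 ω| + |B u₀ ω - B 0 ω|) :=
        ENNReal.ofReal_le_ofReal (by linarith)
      _ ≤ _ := by
        rw [ENNReal.ofReal_add (by positivity) (by positivity),
          ENNReal.ofReal_add (by positivity) (by positivity), ← Real.enorm_eq_ofReal_abs]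
        gcongr
  have hmemLp : MemLp (Z t) 2 P :=
    ((((memLp_const_enorm enorm_ne_top).add hW).add hW).mono_exponent (by norm_num)).of_le_enorm
      (hZmeas t).aestronglyMeasurable (ae_of_all _ hbound)
  simpa only [sq_abs] using hmemLp.integrable_sq

lemma exists_measureReal_oscillation_lt_of_inward_drift [IsFiniteMeasure P]
    (hBc : ∀ ω, Continuous fun t => B t ω) (hBm : ∀ t, Measurable (B t))
    (hF : Continuous F) (hFneg : ∀ y, y * F y ≤ 0) {Y : ℝ → ℝ → Ω → ℝ}
    (hYcont : ∀ r ω, Continuous fun t => Y r t ω)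
    (hSDE : ∀ r : ℝ, ∀ ω, ∀ t ≥ (0:ℝ), Y r t ω = r + (∫ u in (0:ℝ)..t, F (Y r u ω)) + B t ω)
    {a : ℝ} (ha : 0 ≤ a) (htight : ∀ ε > 0, ∃ K, ∀ r, P.real {ω | K < |Y r a ω|} < ε)
    (b : ℝ) {η : ℝ} (hη : 0 < η) {ε : ℝ} (hε : 0 < ε) :
    ∃ δ > 0, ∀ r, P.real {ω | ∃ s ∈ Set.Icc a b, ∃ u ∈ Set.Icc a b,
      |u - s| ≤ δ ∧ η < |Y r u ω - Y r s ω|} < ε := by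
  obtain ⟨K₁, hK₁⟩ := htight (ε / 3) (by positivity)
  obtain ⟨K₂, hK₂⟩ := exists_measureReal_excursion_lt (P := P) hBc hBm a b
    (ε := ε / 3) (by positivity)
  obtain ⟨C, hC⟩ := isCompact_Icc.exists_bound_of_continuousOn
    (hF.continuousOn (s := Set.Icc (-(K₁ + 2 * K₂)) (K₁ + 2 * K₂)))
  obtain ⟨δ₀, hδ₀, hosc⟩ := exists_measureReal_oscillation_lt (P := P) hBc hBm a b
    (η := η / 2) (by positivity) (ε := ε / 3) (by positivity)
  set δ := min δ₀ (η / (2 * (|C| + 1)))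
  refine ⟨δ, lt_min hδ₀ (by positivity), fun r => ?_⟩
  have hsub : {ω | ∃ s ∈ Set.Icc a b, ∃ u ∈ Set.Icc a b, |u - s| ≤ δ ∧
      η < |Y r u ω - Y r s ω|} ⊆ ({ω | K₁ < |Y r a ω|} ∪
        {ω | ∃ u ∈ Set.Icc a b, K₂ < |B u ω - B a ω|}) ∪
        {ω | ∃ s ∈ Set.Icc a b, ∃ u ∈ Set.Icc a b, |u - s| ≤ δ₀ ∧ η / 2 < |B u ω - B s ω|} := by
    rintro ω ⟨s, hs, u, hu, hδ, hlt⟩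
    by_contra hω
    simp only [Set.mem_union, Set.mem_ofPred_eq, not_or, not_exists, not_and, not_lt] at hω
    obtain ⟨⟨hYa, hBa⟩, hBosc⟩ := hω
    have hY := (isSolutionOn_of_eq_integral hF (hYcont r ω) (hSDE r ω) ha b).abs_sub_le_of_bounds
      hFneg (hYcont r ω) hC hYa hBa hs hu
    have hB := hBosc s hs u hu (hδ.trans (min_le_left _ _))
    have hCδ : C * |u - s| < η / 2 := calc
      C * |u - s| ≤ |C| * (η / (2 * (|C| + 1))) :=
        mul_le_mul (le_abs_self C) (hδ.trans (min_le_right _ _)) (abs_nonneg _) (abs_nonneg _)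
      _ < η / 2 := by
        rw [mul_div_assoc', div_lt_div_iff₀ (by positivity) two_pos]
        nlinarith [abs_nonneg C]
    linarith
  calc _ ≤ _ := measureReal_mono hsub
    _ ≤ _ := (measureReal_union_le _ _).trans (add_le_add_left (measureReal_union_le _ _) _)
    _ < ε := by linarith [hK₁ r]

end SDE

theorem stmt_19_general {Ω : Type*} [MeasurableSpace Ω]
    (P : Measure Ω) [IsProbabilityMeasure P]
    (B : ℝ → Ω → ℝ) (hB : IsBrownianMotion P B)
    (F : ℝ → ℝ) (hFcont : Continuous F) (hFneg : ∀ y : ℝ, y * F y ≤ 0)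
    (Y : ℝ → ℝ → Ω → ℝ)  -- initial condition, time, sample point
    (hYcont : ∀ r ω, Continuous fun t => Y r t ω)
    (hYmeas : ∀ r t, Measurable (Y r t))
    (hSDE : ∀ r : ℝ, ∀ ω, ∀ t ≥ (0:ℝ),
      Y r t ω = r + (∫ u in (0:ℝ)..t, F (Y r u ω)) + B t ω)
    (Cb : ℝ → ℝ)
    (hCb : ∀ t > (0:ℝ), ∀ r : ℝ, (∫ ω, |Y r t ω| ^ 2 ∂P) ≤ Cb t)
    (t₀ T : ℝ) (ht₀ : 0 < t₀) :
    (∀ t ∈ Set.Icc t₀ T, ∀ η > (0:ℝ), ∃ A₀ : ℝ, ∀ A ≥ A₀, ∀ r : ℝ,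
      (P {ω | A < |Y r t ω|}).toReal < η) ∧
    (∀ η > (0:ℝ), ∀ η' > (0:ℝ), ∃ δ > (0:ℝ), ∀ r : ℝ,
      (P {ω | ∃ s ∈ Set.Icc t₀ T, ∃ u ∈ Set.Icc t₀ T,
        |u - s| ≤ δ ∧ η < |Y r u ω - Y r s ω|}).toReal < η') := by
  have htight (t : ℝ) (ht : 0 < t) (ε : ℝ) (hε : 0 < ε) :
      ∃ A₀ : ℝ, ∀ A ≥ A₀, ∀ r : ℝ, P.real {ω | A < |Y r t ω|} < ε :=
    exists_measureReal_tail_lt_of_integral_sq_le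
      (fun r => integrable_sq_of_inward_drift hB hFcont hFneg (hYcont r) (hYmeas r) (hSDE r) ht)
      (hCb t ht) hε
  refine ⟨fun t ht => htight t (ht₀.trans_le ht.1), fun η hη ε hε => ?_⟩
  exact exists_measureReal_oscillation_lt_of_inward_drift hB.2.1 hB.2.2.1 hFcont hFneg hYcont
    hSDE ht₀.le (fun ε hε => (htight t₀ ht₀ ε hε).imp fun A hA => hA A le_rfl) T hη hε

/-- Aldous-type tightness on `C([t₀,T];ℝ)`, uniformly in the
initial condition, for solutions of `dY = F(Y)dt + dB` with inward drift. -/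
theorem stmt_19 {Ω : Type*} [MeasurableSpace Ω]
    (P : Measure Ω) [IsProbabilityMeasure P]
    (B : ℝ → Ω → ℝ) (hB : IsBrownianMotion P B)
    (F : ℝ → ℝ) (hFcont : Continuous F) (hFneg : ∀ y : ℝ, y * F y ≤ 0)
    (Y : ℝ → ℝ → Ω → ℝ)  -- initial condition, time, sample point
    (hYcont : ∀ r ω, Continuous fun t => Y r t ω)
    (hYmeas : ∀ r t, Measurable (Y r t))
    (hSDE : ∀ r : ℝ, ∀ ω, ∀ t ≥ (0:ℝ),
      Y r t ω = r + (∫ u in (0:ℝ)..t, F (Y r u ω)) + B t ω)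
    (hmono : ∀ r r' : ℝ, r ≤ r' → ∀ᵐ ω ∂P, ∀ t ≥ (0:ℝ), Y r t ω ≤ Y r' t ω)
    (Cb : ℝ → ℝ)
    (hCb : ∀ t > (0:ℝ), ∀ r : ℝ, (∫ ω, |Y r t ω| ^ 2 ∂P) ≤ Cb t)
    (hCloc : ∀ K : Set ℝ, IsCompact K → K ⊆ Set.Ioi 0 → BddAbove (Cb '' K))
    (t₀ T : ℝ) (ht₀ : 0 < t₀) (hT : t₀ < T) :
    (∀ t ∈ Set.Icc t₀ T, ∀ η > (0:ℝ), ∃ A₀ : ℝ, ∀ A ≥ A₀, ∀ r : ℝ,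
      (P {ω | A < |Y r t ω|}).toReal < η) ∧
    (∀ η > (0:ℝ), ∀ η' > (0:ℝ), ∃ δ > (0:ℝ), ∀ r : ℝ,
      (P {ω | ∃ s ∈ Set.Icc t₀ T, ∃ u ∈ Set.Icc t₀ T,
        |u - s| ≤ δ ∧ η < |Y r u ω - Y r s ω|}).toReal < η') :=
  stmt_19_general P B hB F hFcont hFneg Y hYcont hYmeas hSDE Cb hCb t₀ T ht₀
end
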